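/- arXiv:1308.3975 — 9 statements merged into one kernel-verified Lean document; each statement's English description precedes it below -/
import Mathlib

section
/- For every real exponent p > 1, every β ≥ 1, and all nonnegative reals a, b, one has |a-b|^{p-2}(a-b)(a^β - b^β) ≥ (β p^p / (β+p-1)^p) · |a^{(β+p-1)/p} - b^{(β+p-1)/p}|^p. -/
/-!
Let `γ = (β + p - 1) / p`, so that `γ - 1 = (β - 1) / p`, and let `b < a`. Then
`(a^γ - b^γ) / γ = ∫_b^a t^((β-1)/p) dt`, and Hölder's inequality with exponents `p` and
`p / (p - 1)` against `∫_b^a t^(β-1) dt = (a^β - b^β) / β` and `∫_b^a 1 dt = a - b` gives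
`((a^γ - b^γ) / γ)^p ≤ (a^β - b^β) / β * (a - b)^(p-1)`, which is the claim after multiplying
by `β`. No integrals are needed: Hölder is the weighted AM-GM inequality applied pointwise,
normalised so that the right-hand side integrates to `1`, and the pointwise bound is integrated
by comparing derivatives.
-/

open Real Set

theorem sub_le_sub_of_hasDerivAt_le {f g f' g' : ℝ → ℝ} {a b : ℝ} (hab : a ≤ b)
    (hf : ∀ x, HasDerivAt f (f' x) x) (hg : ∀ x, HasDerivAt g (g' x) x)
    (hle : ∀ x ∈ Ioo a b, f' x ≤ g' x) : f b - f a ≤ g b - g a := by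
  have hmono : MonotoneOn (fun x => g x - f x) (Icc a b) := by
    refine monotoneOn_of_hasDerivWithinAt_nonneg (f' := fun x => g' x - f' x) (convex_Icc a b)
      (fun x _ => ((hg x).sub (hf x)).continuousAt.continuousWithinAt)
      (fun x _ => ((hg x).sub (hf x)).hasDerivWithinAt) fun x hx => ?_
    rw [interior_Icc] at hx
    exact sub_nonneg.2 (hle x hx)
  have := hmono (left_mem_Icc.2 hab) (right_mem_Icc.2 hab) hab
  linarith

theorem rpow_one_div_le_mul_div_add_div {p x A B : ℝ} (hp : 1 < p) (hx : 0 ≤ x)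
    (hA : 0 < A) (hB : 0 < B) :
    x ^ (1 / p) ≤ A ^ (1 / p) * B ^ ((p - 1) / p) * (x / (p * A) + (p - 1) / (p * B)) := by
  have hp0 : 0 < p := one_pos.trans hp
  have amgm := geom_mean_le_arith_mean2_weighted (by positivity) (by bound)
    (div_nonneg hx hA.le) (one_div_pos.2 hB).le (by field_simp; ring : 1 / p + (p - 1) / p = 1)
  have hB1 : B ^ ((p - 1) / p) * (1 / B) ^ ((p - 1) / p) = 1 := by
    rw [← mul_rpow hB.le (one_div_pos.2 hB).le, mul_one_div_cancel hB.ne', one_rpow]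
  calc x ^ (1 / p)
      = A ^ (1 / p) * B ^ ((p - 1) / p) * ((x / A) ^ (1 / p) * (1 / B) ^ ((p - 1) / p)) := by
        rw [div_rpow hx hA.le]
        field_simp
        rw [mul_assoc, hB1, mul_one]
    _ ≤ A ^ (1 / p) * B ^ ((p - 1) / p) * (x / (p * A) + (p - 1) / (p * B)) := by
        gcongr
        exact amgm.trans_eq (by ring)

theorem rpow_sub_rpow_div_le_rpow_mul_rpow {p β a b : ℝ} (hp : 1 < p) (hβ : 1 ≤ β) (hb : 0 ≤ b)
    (hab : b < a) :
    (a ^ ((β + p - 1) / p) - b ^ ((β + p - 1) / p)) / ((β + p - 1) / p) ≤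
      ((a ^ β - b ^ β) / β) ^ (1 / p) * (a - b) ^ ((p - 1) / p) := by
  have hp0 : 0 < p := one_pos.trans hp
  have hβ0 : 0 < β := one_pos.trans_le hβ
  set γ := (β + p - 1) / p with hγ
  have hγ1 : 1 ≤ γ := by rw [hγ, le_div_iff₀ hp0]; linarith
  set A := (a ^ β - b ^ β) / β
  set B := a - b
  have hA : 0 < A := div_pos (sub_pos.2 (rpow_lt_rpow hb hab hβ0)) hβ0
  have hB : 0 < B := sub_pos.2 hab
  set C := A ^ (1 / p) * B ^ ((p - 1) / p)
  have hf (x : ℝ) : HasDerivAt (fun x => x ^ γ / γ) (x ^ (γ - 1)) x :=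
    ((hasDerivAt_rpow_const (Or.inr hγ1)).div_const γ).congr_deriv (by field_simp)
  have hg (x : ℝ) : HasDerivAt (fun x => C * (x ^ β / (β * p * A) + (p - 1) * x / (p * B)))
      (C * (x ^ (β - 1) / (p * A) + (p - 1) / (p * B))) x :=
    ((((hasDerivAt_rpow_const (Or.inr hβ)).div_const (β * p * A)).add
      (((hasDerivAt_id x).const_mul (p - 1)).div_const (p * B))).const_mul C).congr_deriv
        (by field_simp)
  have hle : ∀ x ∈ Ioo b a, x ^ (γ - 1) ≤ C * (x ^ (β - 1) / (p * A) + (p - 1) / (p * B)) := by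
    intro x hx
    have hx0 : 0 ≤ x := hb.trans hx.1.le
    have hγ' : γ - 1 = (β - 1) * (1 / p) := by rw [hγ]; field_simp; ring
    rw [hγ', rpow_mul hx0]
    exact rpow_one_div_le_mul_div_add_div hp (rpow_nonneg hx0 _) hA hB
  calc (a ^ γ - b ^ γ) / γ = a ^ γ / γ - b ^ γ / γ := sub_div _ _ _
    _ ≤ C * (a ^ β / (β * p * A) + (p - 1) * a / (p * B)) -
          C * (b ^ β / (β * p * A) + (p - 1) * b / (p * B)) :=
        sub_le_sub_of_hasDerivAt_le hab.le hf hg hle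
    _ = C * ((a ^ β - b ^ β) / (β * p * A) + (p - 1) * B / (p * B)) := by ring
    _ = C := by
        have hβA : a ^ β - b ^ β = β * A := (mul_div_cancel₀ _ hβ0.ne').symm
        rw [hβA]
        field_simp
        ring

theorem pointwise_power_inequality_of_lt {p β a b : ℝ} (hp : 1 < p) (hβ : 1 ≤ β) (hb : 0 ≤ b)
    (hab : b < a) :
    |a - b| ^ (p - 2) * (a - b) * (a ^ β - b ^ β) ≥
      β * p ^ p / (β + p - 1) ^ p *
        |a ^ ((β + p - 1) / p) - b ^ ((β + p - 1) / p)| ^ p := by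
  have hp0 : 0 < p := one_pos.trans hp
  have hβ0 : 0 < β := one_pos.trans_le hβ
  have hB : 0 < a - b := sub_pos.2 hab
  set γ := (β + p - 1) / p with hγ
  have hγ0 : 0 < γ := div_pos (by linarith) hp0
  have hD : 0 < a ^ γ - b ^ γ := sub_pos.2 (rpow_lt_rpow hb hab hγ0)
  have hA : 0 < (a ^ β - b ^ β) / β := div_pos (sub_pos.2 (rpow_lt_rpow hb hab hβ0)) hβ0
  have holder : ((a ^ γ - b ^ γ) / γ) ^ p ≤ (a ^ β - b ^ β) / β * (a - b) ^ (p - 1) :=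
    calc ((a ^ γ - b ^ γ) / γ) ^ p
        ≤ (((a ^ β - b ^ β) / β) ^ (1 / p) * (a - b) ^ ((p - 1) / p)) ^ p :=
          rpow_le_rpow (div_pos hD hγ0).le (rpow_sub_rpow_div_le_rpow_mul_rpow hp hβ hb hab)
            hp0.le
      _ = (a ^ β - b ^ β) / β * (a - b) ^ (p - 1) := by
          rw [mul_rpow (by positivity) (by positivity), ← rpow_mul hA.le,
            ← rpow_mul hB.le, one_div_mul_cancel hp0.ne', div_mul_cancel₀ _ hp0.ne', rpow_one]
  have hsum : β + p - 1 = γ * p := by rw [hγ]; field_simp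
  rw [abs_of_pos hB, abs_of_pos hD, ← rpow_add_one hB.ne', hsum, mul_rpow hγ0.le hp0.le]
  calc β * p ^ p / (γ ^ p * p ^ p) * (a ^ γ - b ^ γ) ^ p
      = β * ((a ^ γ - b ^ γ) / γ) ^ p := by
        rw [div_rpow hD.le hγ0.le]
        field_simp
    _ ≤ β * ((a ^ β - b ^ β) / β * (a - b) ^ (p - 1)) := by gcongr
    _ = (a - b) ^ (p - 2 + 1) * (a ^ β - b ^ β) := by
        rw [show p - 2 + 1 = p - 1 by ring]
        field_simp

theorem pointwise_power_inequality (p β a b : ℝ) (hp : 1 < p) (hβ : 1 ≤ β)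
    (ha : 0 ≤ a) (hb : 0 ≤ b) :
    |a - b| ^ (p - 2) * (a - b) * (a ^ β - b ^ β) ≥
      β * p ^ p / (β + p - 1) ^ p *
        |a ^ ((β + p - 1) / p) - b ^ ((β + p - 1) / p)| ^ p := by
  rcases lt_trichotomy b a with hab | rfl | hba
  · exact pointwise_power_inequality_of_lt hp hβ hb hab
  · simp [zero_rpow (one_pos.trans hp).ne']
  · have := pointwise_power_inequality_of_lt hp hβ ha hba
    rw [abs_sub_comm b a, abs_sub_comm (b ^ _)] at this
    linarith
end

section
/- For every real exponent p > 1, every β ≥ 1, every M ≥ 0, and all nonnegative reals a, b, setting a_M = min(a,M) and b_M = min(b,M), one has |a-b|^{p-2}(a-b)(a_M^β - b_M^β) ≥ (β p^p / (β+p-1)^p) · |a_M^{(β+p-1)/p} - b_M^{(β+p-1)/p}|^p. -/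
/-!
With `γ = (β + p - 1) / p`, write `x ^ γ - y ^ γ = γ ∫_y^x t ^ ((β - 1) / p) dt` and apply
Hölder's inequality to `t ^ ((β - 1) / p) * 1` with exponents `p` and `p / (p - 1)`: since
`∫_y^x t ^ (β - 1) dt = (x ^ β - y ^ β) / β`, this gives
`(x ^ γ - y ^ γ) ^ p ≤ γ ^ p * (x ^ β - y ^ β) / β * (x - y) ^ (p - 1)`.
Truncation at `M` is monotone and 1-Lipschitz, so `x = min a M`, `y = min b M` satisfy
`x - y ≤ a - b` when `b ≤ a`, and the general case follows by symmetry.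
-/

open MeasureTheory Real

lemma rpow_sub_rpow_le_holder {p β x y : ℝ} (hp : 1 < p) (hβ : 1 ≤ β) (hy : 0 ≤ y)
    (hyx : y ≤ x) :
    x ^ ((β + p - 1) / p) - y ^ ((β + p - 1) / p) ≤
      (β + p - 1) / p * (((x ^ β - y ^ β) / β) ^ (1 / p) * (x - y) ^ (1 / p.conjExponent)) := by
  have hp0 : 0 < p := zero_lt_one.trans hp
  set r := (β - 1) / p with hr_def
  have hr : 0 ≤ r := div_nonneg (by linarith) hp0.le
  have hr1 : r + 1 = (β + p - 1) / p := by rw [hr_def]; field_simp; ring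
  have hrp : ∀ t : ℝ, 0 ≤ t → (t ^ r) ^ p = t ^ (β - 1) := fun t ht => by
    rw [← rpow_mul ht, div_mul_cancel₀ _ hp0.ne']
  set μ := volume.restrict (Set.Ioc y x)
  have hμ : ∀ᵐ t ∂μ, t ∈ Set.Ioc y x := ae_restrict_mem measurableSet_Ioc
  have : IsFiniteMeasure μ := isFiniteMeasure_restrict.2 measure_Ioc_lt_top.ne
  have holder := integral_mul_le_Lp_mul_Lq_of_nonneg (μ := μ) (HolderConjugate.conjExponent hp)
    (f := fun t => t ^ r) (g := fun _ => 1)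
    (hμ.mono fun t ht => rpow_nonneg (hy.trans ht.1.le) r) (.of_forall fun _ => zero_le_one)
    (MemLp.of_bound (continuous_rpow_const hr).aestronglyMeasurable (x ^ r) (hμ.mono fun t ht => by
      rw [norm_of_nonneg (rpow_nonneg (hy.trans ht.1.le) r)]
      exact rpow_le_rpow (hy.trans ht.1.le) ht.2 hr))
    (memLp_const 1)
  have int_rpow : ∀ s, -1 < s → ∫ t, t ^ s ∂μ = (x ^ (s + 1) - y ^ (s + 1)) / (s + 1) :=
    fun s hs => by rw [← intervalIntegral.integral_of_le hyx, integral_rpow (.inl hs)]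
  have int_rpow_p : ∫ t, (t ^ r) ^ p ∂μ = (x ^ β - y ^ β) / β := by
    rw [integral_congr_ae (hμ.mono fun t ht => hrp t (hy.trans ht.1.le)), int_rpow _ (by linarith)]
    simp
  have hμx : μ.real Set.univ = x - y := by simp [μ, hyx]
  simp only [mul_one, one_rpow, integral_const, smul_eq_mul, hμx, int_rpow r (by linarith),
    int_rpow_p, hr1] at holder
  exact (div_le_iff₀' (by rw [← hr1]; linarith)).1 holder

lemma mul_rpow_sub_rpow_rpow_le {p β x y : ℝ} (hp : 1 < p) (hβ : 1 ≤ β) (hy : 0 ≤ y)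
    (hyx : y ≤ x) :
    β * p ^ p / (β + p - 1) ^ p * (x ^ ((β + p - 1) / p) - y ^ ((β + p - 1) / p)) ^ p ≤
      (x - y) ^ (p - 1) * (x ^ β - y ^ β) := by
  have hp0 : 0 < p := zero_lt_one.trans hp
  have hγ : 0 ≤ (β + p - 1) / p := div_nonneg (by linarith) hp0.le
  have hA : 0 ≤ (x ^ β - y ^ β) / β :=
    div_nonneg (sub_nonneg.2 (rpow_le_rpow hy hyx (by linarith))) (by linarith)
  have hB : 0 ≤ x - y := sub_nonneg.2 hyx
  have key := rpow_le_rpow (sub_nonneg.2 (rpow_le_rpow hy hyx hγ))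
    (rpow_sub_rpow_le_holder hp hβ hy hyx) hp0.le
  have hq : 1 / p.conjExponent * p = p - 1 := by
    rw [conjExponent]; field_simp
  rw [mul_rpow hγ (by positivity), mul_rpow (by positivity) (by positivity), ← rpow_mul hA,
    ← rpow_mul hB, one_div_mul_cancel hp0.ne', rpow_one, hq] at key
  have hC : 0 ≤ β * p ^ p / (β + p - 1) ^ p :=
    div_nonneg (mul_nonneg (by linarith) (rpow_nonneg hp0.le _)) (rpow_nonneg (by linarith) _)
  calc β * p ^ p / (β + p - 1) ^ p * (x ^ ((β + p - 1) / p) - y ^ ((β + p - 1) / p)) ^ p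
      ≤ β * p ^ p / (β + p - 1) ^ p *
          (((β + p - 1) / p) ^ p * ((x ^ β - y ^ β) / β * (x - y) ^ (p - 1))) := by gcongr
    _ = (x - y) ^ (p - 1) * (x ^ β - y ^ β) := by
      have : (0:ℝ) < β + p - 1 := by linarith
      rw [div_rpow this.le hp0.le]
      field_simp

lemma abs_rpow_sub_two_mul_self {p d : ℝ} (hp : p ≠ 1) (hd : 0 ≤ d) :
    |d| ^ (p - 2) * d = d ^ (p - 1) := by
  rw [abs_of_nonneg hd, ← rpow_add_one' hd (by contrapose! hp; linarith)]
  ring_nf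

theorem pointwise_power_inequality_truncated (p β M a b : ℝ) (hp : 1 < p) (hβ : 1 ≤ β)
    (hM : 0 ≤ M) (ha : 0 ≤ a) (hb : 0 ≤ b) :
    |a - b| ^ (p - 2) * (a - b) * (min a M ^ β - min b M ^ β) ≥
      β * p ^ p / (β + p - 1) ^ p *
        |min a M ^ ((β + p - 1) / p) - min b M ^ ((β + p - 1) / p)| ^ p := by
  wlog hba : b ≤ a with H
  · have := H p β M b a hp hβ hM hb ha (le_of_not_ge hba)
    rw [abs_sub_comm b a, abs_sub_comm (min b M ^ _)] at this
    linarith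
  have hy : 0 ≤ min b M := le_min hb hM
  have hyx : min b M ≤ min a M := min_le_min_right M hba
  have htrunc : min a M - min b M ≤ a - b := by
    simp only [min_def]
    split_ifs <;> linarith
  have hγ : 0 ≤ (β + p - 1) / p := div_nonneg (by linarith) (by linarith)
  rw [abs_rpow_sub_two_mul_self hp.ne' (sub_nonneg.2 hba),
    abs_of_nonneg (sub_nonneg.2 (rpow_le_rpow hy hyx hγ))]
  calc _ ≤ (min a M - min b M) ^ (p - 1) * (min a M ^ β - min b M ^ β) :=
        mul_rpow_sub_rpow_rpow_le hp hβ hy hyx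
    _ ≤ (a - b) ^ (p - 1) * (min a M ^ β - min b M ^ β) := by
        gcongr
        exact sub_nonneg.2 (rpow_le_rpow hy hyx (by linarith))
end

section
/- Let p > 1, β ≥ 1, M ≥ 0, a, b ≥ 0, and set a_M = min(a,M), b_M = min(b,M). Then |a_M - b_M|^{p-2}(a_M - b_M)(a_M^β - b_M^β) ≤ |a-b|^{p-2}(a-b)(a_M^β - b_M^β). -/
/-! The signed power `x ↦ |x|^(p-2) x` is monotone, and truncation at `M` is order-preserving and
1-Lipschitz, so `a_M - b_M` lies between `0` and `a - b`, while the common factor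
`a_M^β - b_M^β` has the sign of `a - b`. -/

open Set

lemma min_sub_min_le_sub {α : Type*} [AddCommGroup α] [LinearOrder α] [IsOrderedAddMonoid α]
    {a b : α} (hba : b ≤ a) (c : α) : min a c - min b c ≤ a - b := by
  calc min a c - min b c ≤ |min a c - min b c| := le_abs_self _
    _ ≤ max |a - b| |c - c| := abs_min_sub_min_le_max a c b c
    _ = a - b := by
      rw [sub_self, abs_zero, max_eq_left (abs_nonneg _), abs_of_nonneg (sub_nonneg.2 hba)]

namespace Real

lemma abs_rpow_sub_two_mul_self_of_nonneg {p x : ℝ} (hp : p ≠ 1) (hx : 0 ≤ x) :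
    |x| ^ (p - 2) * x = x ^ (p - 1) := by
  rcases hx.eq_or_lt with rfl | hx
  · simp [zero_rpow (sub_ne_zero.2 hp)]
  · rw [abs_of_pos hx, ← rpow_add_one hx.ne']
    ring_nf

lemma monotone_abs_rpow_sub_two_mul_self {p : ℝ} (hp : 1 < p) :
    Monotone fun x : ℝ => |x| ^ (p - 2) * x := by
  have hIci : MonotoneOn (fun x : ℝ => |x| ^ (p - 2) * x) (Ici 0) :=
    (monotoneOn_rpow_Ici_of_exponent_nonneg (by linarith)).congr fun x hx =>
      (abs_rpow_sub_two_mul_self_of_nonneg hp.ne' hx).symm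
  -- the signed power is odd, so monotonicity on `[0, ∞)` transfers to `(-∞, 0]`
  refine MonotoneOn.Iic_union_Ici (a := 0) (fun x hx y hy hxy => ?_) hIci
  have := hIci (mem_Ici.2 (neg_nonneg.2 hy)) (mem_Ici.2 (neg_nonneg.2 hx)) (neg_le_neg hxy)
  simp only [abs_neg, mul_neg] at this
  linarith

end Real

theorem truncation_monotonicity (p β M a b : ℝ) (hp : 1 < p) (hβ : 1 ≤ β)
    (hM : 0 ≤ M) (ha : 0 ≤ a) (hb : 0 ≤ b) :
    |min a M - min b M| ^ (p - 2) * (min a M - min b M) *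
        (min a M ^ β - min b M ^ β) ≤
      |a - b| ^ (p - 2) * (a - b) * (min a M ^ β - min b M ^ β) := by
  have hφ := Real.monotone_abs_rpow_sub_two_mul_self hp
  have hβ₀ : 0 ≤ β := by linarith
  rcases le_total b a with hba | hab
  · refine mul_le_mul_of_nonneg_right (hφ (min_sub_min_le_sub hba M)) (sub_nonneg.2 ?_)
    exact Real.rpow_le_rpow (le_min hb hM) (min_le_min_right M hba) hβ₀
  · have hab_M := min_sub_min_le_sub hab M
    refine mul_le_mul_of_nonpos_right (hφ (by linarith)) (sub_nonpos.2 ?_)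
    exact Real.rpow_le_rpow (le_min ha hM) (min_le_min_right M hab) hβ₀
end

section
/- For every real t with 0 ≤ t < 1, every p > 1, and every β ≥ 1, one has (1-t)^{p-1}(1-t^β) ≥ (β p^p/(β+p-1)^p)(1 - t^{(β+p-1)/p})^p. -/
/-!
Put `q = (β + p - 1) / p`, so that `(q - 1) * p = β - 1`. Jensen's inequality for the convex
function `x ↦ x ^ p` on `[t, 1]` gives
`(∫_t^1 s^(q-1) ds)^p ≤ (1 - t)^(p-1) ∫_t^1 s^(β-1) ds`, and the two integrals are
`(1 - t^q) / q` and `(1 - t^β) / β`.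
-/

open MeasureTheory Set Real

theorem rpow_intervalIntegral_le_mul_intervalIntegral_rpow {f : ℝ → ℝ} {a b p : ℝ}
    (hab : a < b) (hp : 1 ≤ p) (hf : ContinuousOn f (Icc a b))
    (hf0 : ∀ x ∈ Icc a b, 0 ≤ f x) :
    (∫ x in a..b, f x) ^ p ≤ (b - a) ^ (p - 1) * ∫ x in a..b, f x ^ p := by
  have hba : 0 < b - a := sub_pos.mpr hab
  have hfi : IntegrableOn f (Ioc a b) := (hf.integrableOn_Icc).mono_set Ioc_subset_Icc_self
  have hfpi : IntegrableOn (fun x => f x ^ p) (Ioc a b) :=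
    ((hf.rpow_const fun _ _ => Or.inr (by linarith)).integrableOn_Icc).mono_set
      Ioc_subset_Icc_self
  have jensen : (⨍ x in a..b, f x) ^ p ≤ ⨍ x in a..b, f x ^ p := by
    rw [uIoc_of_le hab.le]
    refine (convexOn_rpow hp).map_set_average_le
      (continuousOn_id.rpow_const fun _ _ => Or.inr (by linarith)) isClosed_Ici
      (by simp [hab]) (by simp) ?_ hfi hfpi
    filter_upwards [ae_restrict_mem measurableSet_Ioc] with x hx
    exact hf0 x (Ioc_subset_Icc_self hx)
  rw [interval_average_eq_div, interval_average_eq_div,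
    div_rpow (intervalIntegral.integral_nonneg hab.le hf0) hba.le,
    div_le_div_iff₀ (by positivity) hba] at jensen
  calc (∫ x in a..b, f x) ^ p = (∫ x in a..b, f x) ^ p * (b - a) / (b - a) := by field_simp
    _ ≤ (∫ x in a..b, f x ^ p) * (b - a) ^ p / (b - a) := by gcongr
    _ = (b - a) ^ (p - 1) * ∫ x in a..b, f x ^ p := by rw [rpow_sub_one hba.ne']; ring

theorem scalar_power_inequality (t p β : ℝ) (ht0 : 0 ≤ t) (ht1 : t < 1)
    (hp : 1 < p) (hβ : 1 ≤ β) :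
    (1 - t) ^ (p - 1) * (1 - t ^ β) ≥
      β * p ^ p / (β + p - 1) ^ p * (1 - t ^ ((β + p - 1) / p)) ^ p := by
  have hp0 : 0 < p := by linarith
  have hβp : 0 < β + p - 1 := by linarith
  set q := (β + p - 1) / p with hq
  have hq1 : 0 ≤ q - 1 := by rw [hq, sub_nonneg, one_le_div hp0]; linarith
  have hqp : (q - 1) * p = β - 1 := by rw [hq]; field_simp; ring
  have hjensen := rpow_intervalIntegral_le_mul_intervalIntegral_rpow (f := fun x => x ^ (q - 1))
    ht1 hp.le (continuous_rpow_const hq1).continuousOn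
    (fun x hx => rpow_nonneg (ht0.trans hx.1) _)
  have hpow : ∀ x ∈ uIcc t 1, (x ^ (q - 1)) ^ p = x ^ (β - 1) := fun x hx => by
    rw [← rpow_mul (ht0.trans (uIcc_of_le ht1.le ▸ hx).1), hqp]
  rw [intervalIntegral.integral_congr hpow, integral_rpow (Or.inl (by linarith)),
    integral_rpow (Or.inl (by linarith)), sub_add_cancel, sub_add_cancel, one_rpow, one_rpow,
    div_rpow (sub_nonneg.mpr (rpow_le_one ht0 ht1.le (by linarith))) (by linarith), hq,
    div_rpow hβp.le hp0.le] at hjensen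
  rw [ge_iff_le]
  calc β * p ^ p / (β + p - 1) ^ p * (1 - t ^ ((β + p - 1) / p)) ^ p
      = β * ((1 - t ^ ((β + p - 1) / p)) ^ p / ((β + p - 1) ^ p / p ^ p)) := by field_simp
    _ ≤ β * ((1 - t) ^ (p - 1) * ((1 - t ^ β) / β)) := by gcongr
    _ = (1 - t) ^ (p - 1) * (1 - t ^ β) := by field_simp
end

section
/- Let s ∈ (0,1), p ≥ 1, and let Ω ⊂ ℝ^N be open and bounded. Suppose B is a ball contained in ℝ^N \setminus Ω. Then for every smooth compactly supported function u with support in Ω, ∫_Ω |u|^p dx ≤ (diam(Ω ∪ B)^{N+sp}/|B|) · ∫∫_{ℝ^N×ℝ^N} |u(x)-u(y)|^p/|x-y|^{N+sp} dx dy. -/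
open MeasureTheory
open scoped ENNReal

theorem fractional_poincare {N : ℕ} (s p : ℝ) (hs : s ∈ Set.Ioo (0 : ℝ) 1) (hp : 1 ≤ p)
    (Ω : Set (EuclideanSpace ℝ (Fin N))) (hΩo : IsOpen Ω) (hΩb : Bornology.IsBounded Ω)
    (x0 : EuclideanSpace ℝ (Fin N)) (r : ℝ) (hr : 0 < r)
    (hB : Metric.ball x0 r ⊆ Ωᶜ)
    (u : EuclideanSpace ℝ (Fin N) → ℝ) (hu : ContDiff ℝ (⊤ : ℕ∞) u)
    (hcs : HasCompactSupport u) (hsupp : tsupport u ⊆ Ω) :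
    ∫⁻ x in Ω, ENNReal.ofReal (|u x| ^ p) ≤
      ENNReal.ofReal (Metric.diam (Ω ∪ Metric.ball x0 r) ^ ((N : ℝ) + s * p) /
          (volume (Metric.ball x0 r)).toReal) *
        ∫⁻ x, ∫⁻ y,
          ENNReal.ofReal (|u x - u y| ^ p / ‖x - y‖ ^ ((N : ℝ) + s * p)) := by
  obtain hΩe | ⟨z, hz⟩ := Ω.eq_empty_or_nonempty
  · simp [hΩe]
  set B := Metric.ball x0 r with hBdef
  set C : ℝ := (N : ℝ) + s * p with hCdef
  have hp0 : 0 < p := lt_of_lt_of_le one_pos hp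
  have hC0 : 0 < C := by
    have : 0 < s * p := mul_pos hs.1 hp0
    positivity
  set D : ℝ := Metric.diam (Ω ∪ B) with hDdef
  have hbd : Bornology.IsBounded (Ω ∪ B) := hΩb.union Metric.isBounded_ball
  have hx0B : x0 ∈ B := Metric.mem_ball_self hr
  have hD0 : 0 < D := by
    have hne : z ≠ x0 := fun h => (hB hx0B) (h ▸ hz)
    have h1 := Metric.dist_le_diam_of_mem hbd (Set.mem_union_left _ hz)
      (Set.mem_union_right _ hx0B)
    have h2 := dist_pos.mpr hne
    linarith
  have hDC : 0 < D ^ C := Real.rpow_pos_of_pos hD0 C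
  set A : ℝ≥0∞ := ENNReal.ofReal (D ^ C) with hAdef
  set V : ℝ≥0∞ := volume B with hVdef
  have hA0 : A ≠ 0 := by rw [hAdef]; exact (ENNReal.ofReal_pos.mpr hDC).ne'
  have hAt : A ≠ ⊤ := ENNReal.ofReal_ne_top
  have hV0 : V ≠ 0 := (Metric.measure_ball_pos volume x0 hr).ne'
  have hVt : V ≠ ⊤ := measure_ball_lt_top.ne
  have hkt : V / A ≠ ⊤ := (ENNReal.div_lt_top hVt hA0).ne
  set I : ℝ≥0∞ := ∫⁻ x, ∫⁻ y, ENNReal.ofReal (|u x - u y| ^ p / ‖x - y‖ ^ C) with hIdef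
  set L : ℝ≥0∞ := ∫⁻ x in Ω, ENNReal.ofReal (|u x| ^ p) with hLdef
  have key : L * (V / A) ≤ I := by
    have step1 : ∀ x ∈ Ω, ENNReal.ofReal (|u x| ^ p) * (V / A) ≤
        ∫⁻ y, ENNReal.ofReal (|u x - u y| ^ p / ‖x - y‖ ^ C) := by
      intro x hx
      have hinner : ∀ y ∈ B, ENNReal.ofReal (|u x| ^ p) / A ≤
          ENNReal.ofReal (|u x - u y| ^ p / ‖x - y‖ ^ C) := by
        intro y hy
        have huy : u y = 0 :=
          image_eq_zero_of_notMem_tsupport (fun h => (hB hy) (hsupp h))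
        have hxy : 0 < ‖x - y‖ := by
          rw [norm_sub_pos_iff]
          exact fun h => (hB hy) (h ▸ hx)
        have hle : ‖x - y‖ ≤ D := by
          rw [← dist_eq_norm]
          exact Metric.dist_le_diam_of_mem hbd (Set.mem_union_left _ hx)
            (Set.mem_union_right _ hy)
        have hreal : |u x| ^ p / D ^ C ≤ |u x - u y| ^ p / ‖x - y‖ ^ C := by
          rw [huy, sub_zero]
          have h1 : ‖x - y‖ ^ C ≤ D ^ C := Real.rpow_le_rpow hxy.le hle hC0.le
          have h2 : 0 < ‖x - y‖ ^ C := Real.rpow_pos_of_pos hxy C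
          gcongr
        calc ENNReal.ofReal (|u x| ^ p) / A
            = ENNReal.ofReal (|u x| ^ p / D ^ C) := (ENNReal.ofReal_div_of_pos hDC).symm
          _ ≤ _ := ENNReal.ofReal_le_ofReal hreal
      calc ENNReal.ofReal (|u x| ^ p) * (V / A)
          = ENNReal.ofReal (|u x| ^ p) / A * V := by
            rw [div_eq_mul_inv, div_eq_mul_inv, mul_assoc, mul_comm V, ← mul_assoc]
        _ = ∫⁻ _ in B, ENNReal.ofReal (|u x| ^ p) / A := (setLIntegral_const _ _).symm
        _ ≤ ∫⁻ y in B, ENNReal.ofReal (|u x - u y| ^ p / ‖x - y‖ ^ C) :=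
            setLIntegral_mono' measurableSet_ball hinner
        _ ≤ ∫⁻ y, ENNReal.ofReal (|u x - u y| ^ p / ‖x - y‖ ^ C) :=
            setLIntegral_le_lintegral _ _
    calc L * (V / A) = ∫⁻ x in Ω, ENNReal.ofReal (|u x| ^ p) * (V / A) :=
          (lintegral_mul_const' _ _ hkt).symm
      _ ≤ ∫⁻ x in Ω, ∫⁻ y, ENNReal.ofReal (|u x - u y| ^ p / ‖x - y‖ ^ C) :=
          setLIntegral_mono' hΩo.measurableSet step1
      _ ≤ I := setLIntegral_le_lintegral _ _
  have hofReal : ENNReal.ofReal (D ^ C / V.toReal) = A / V := by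
    rw [ENNReal.ofReal_div_of_pos (ENNReal.toReal_pos hV0 hVt), ENNReal.ofReal_toReal hVt]
  rw [hofReal]
  have hcancel : A / V * (V / A) = 1 := by
    rw [div_eq_mul_inv, div_eq_mul_inv, mul_assoc, ← mul_assoc V⁻¹,
      ENNReal.inv_mul_cancel hV0 hVt, one_mul, ENNReal.mul_inv_cancel hA0 hAt]
  calc L = L * (A / V * (V / A)) := by rw [hcancel, mul_one]
    _ = A / V * (L * (V / A)) := by ring
    _ ≤ A / V * I := mul_le_mul_right key _
end

section
/- Let s ∈ (0,1). For every u ∈ C^1_c(ℝ^N) (continuously differentiable with compact support), one has ∫∫_{ℝ^N×ℝ^N} |u(x)-u(y)|/|x-y|^{N+s} dx dy ≤ N ω_N ( (1/(1-s)) ∫_{ℝ^N} |∇u| dx + (2/s) ∫_{ℝ^N} |u| dx ), where ω_N is the Lebesgue measure of the unit ball in ℝ^N. -/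
/-!
Substitute `y = x + h` and integrate in `x` first: the double integral becomes
`∫ ‖h‖^{-(N+s)} ∫ |u(x) - u(x+h)| dx dh`. The inner integral is at most `‖h‖ ∫ |∇u|` by the
fundamental theorem of calculus along segments, and at most `2 ∫ |u|` by the triangle inequality;
use the first bound for `‖h‖ < 1` and the second for `‖h‖ ≥ 1`. In polar coordinates
`∫_{‖h‖<1} ‖h‖^{1-N-s} dh = N ω_N / (1 - s)` and `∫_{‖h‖≥1} ‖h‖^{-N-s} dh = N ω_N / s`.
-/

open MeasureTheory Set Metric
open scoped ENNReal

local notation "dim" => Module.finrank ℝ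

lemma lintegral_Ioo_zero_one_rpow {r : ℝ} (hr : -1 < r) :
    ∫⁻ y in Ioo (0 : ℝ) 1, ENNReal.ofReal (y ^ r) = ENNReal.ofReal (1 / (r + 1)) := by
  have hint : IntegrableOn (fun y : ℝ => y ^ r) (Ioo 0 1) :=
    (intervalIntegral.integrableOn_Ioo_rpow_iff one_pos).2 hr
  rw [← ofReal_integral_eq_lintegral_ofReal hint
    (ae_restrict_of_forall_mem measurableSet_Ioo fun y hy => Real.rpow_nonneg hy.1.le r),
    ← integral_Ioc_eq_integral_Ioo, ← intervalIntegral.integral_of_le zero_le_one,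
    integral_rpow (Or.inl hr), Real.one_rpow, Real.zero_rpow (by linarith), sub_zero]

lemma lintegral_Ioi_one_rpow {r : ℝ} (hr : r < -1) :
    ∫⁻ y in Ioi (1 : ℝ), ENNReal.ofReal (y ^ r) = ENNReal.ofReal (-1 / (r + 1)) := by
  rw [← ofReal_integral_eq_lintegral_ofReal (integrableOn_Ioi_rpow_of_lt hr one_pos)
    (ae_restrict_of_forall_mem measurableSet_Ioi fun y hy => Real.rpow_nonneg
      (zero_lt_one.trans hy).le r),
    integral_Ioi_rpow_of_lt hr one_pos, Real.one_rpow]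

lemma ofReal_pow_pred_mul_ofReal_rpow {n : ℕ} (hn : 0 < n) {y : ℝ} (hy : 0 < y) (a : ℝ) :
    ENNReal.ofReal (y ^ (n - 1)) * ENNReal.ofReal (y ^ a) =
      ENNReal.ofReal (y ^ ((n : ℝ) - 1 + a)) := by
  rw [← ENNReal.ofReal_mul (by positivity), ← Real.rpow_natCast, ← Real.rpow_add hy,
    Nat.cast_pred hn]

lemma lintegral_ofReal_div_rpow {α : Type*} [MeasurableSpace α] (μ : Measure α) (f : α → ℝ)
    {c : ℝ} (hc : 0 ≤ c) (p : ℝ) :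
    ∫⁻ x, ENNReal.ofReal (f x / c ^ p) ∂μ =
      (∫⁻ x, ENNReal.ofReal (f x) ∂μ) * ENNReal.ofReal (c ^ (-p)) := by
  rw [← lintegral_mul_const' _ _ ENNReal.ofReal_ne_top]
  refine lintegral_congr fun x => ?_
  rw [Real.rpow_neg hc, ← ENNReal.ofReal_mul' (by positivity), div_eq_mul_inv]

lemma lintegral_lintegral_eq_lintegral_lintegral_add {G : Type*} [AddGroup G]
    [MeasurableSpace G] [MeasurableAdd₂ G] (μ : Measure G) [SFinite μ] [μ.IsAddLeftInvariant]
    {F : G → G → ℝ≥0∞} (hF : Measurable (Function.uncurry F)) :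
    ∫⁻ x, ∫⁻ y, F x y ∂μ ∂μ = ∫⁻ h, ∫⁻ x, F x (x + h) ∂μ ∂μ := by
  calc ∫⁻ x, ∫⁻ y, F x y ∂μ ∂μ = ∫⁻ x, ∫⁻ h, F x (x + h) ∂μ ∂μ :=
        lintegral_congr fun x => (lintegral_add_left_eq_self (F x) x).symm
    _ = ∫⁻ h, ∫⁻ x, F x (x + h) ∂μ ∂μ :=
        lintegral_lintegral_swap (hF.comp (measurable_fst.prodMk measurable_add)).aemeasurable

lemma lintegral_abs_sub_comp_add_le_two_mul {G : Type*} [AddGroup G] [MeasurableSpace G]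
    [MeasurableAdd G] (μ : Measure G) [μ.IsAddRightInvariant] {u : G → ℝ} (hu : Measurable u)
    (h : G) :
    ∫⁻ x, ENNReal.ofReal |u x - u (x + h)| ∂μ ≤ 2 * ∫⁻ x, ENNReal.ofReal |u x| ∂μ :=
  calc ∫⁻ x, ENNReal.ofReal |u x - u (x + h)| ∂μ
      ≤ ∫⁻ x, ENNReal.ofReal |u x| + ENNReal.ofReal |u (x + h)| ∂μ :=
        lintegral_mono fun x => (ENNReal.ofReal_le_ofReal (abs_sub _ _)).trans ENNReal.ofReal_add_le
    _ = 2 * ∫⁻ x, ENNReal.ofReal |u x| ∂μ := by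
        rw [lintegral_add_left hu.abs.ennreal_ofReal,
          lintegral_add_right_eq_self (fun x => ENNReal.ofReal |u x|) h, two_mul]

section Translation

variable {E : Type*} [NormedAddCommGroup E] [NormedSpace ℝ E]

lemma ofReal_abs_sub_comp_add_le_lintegral {u : E → ℝ} (hu : ContDiff ℝ 1 u) (x h : E) :
    ENNReal.ofReal |u x - u (x + h)| ≤
      ∫⁻ t in Ioc (0 : ℝ) 1, ENNReal.ofReal (‖fderiv ℝ u (x + t • h)‖ * ‖h‖) := by
  have hDu : Continuous fun t : ℝ => fderiv ℝ u (x + t • h) := by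
    have := hu.continuous_fderiv one_ne_zero
    fun_prop
  have hline : ∀ t ∈ uIcc (0 : ℝ) 1,
      HasDerivAt (fun τ : ℝ => u (x + τ • h)) (fderiv ℝ u (x + t • h) h) t := fun t _ =>
    ((hu.differentiable one_ne_zero _).hasFDerivAt).comp_hasDerivAt t
      (((hasDerivAt_id t).smul_const h).const_add x |>.congr_deriv (one_smul ℝ h))
  have hftc : u (x + h) - u x = ∫ t in (0 : ℝ)..1, fderiv ℝ u (x + t • h) h := by
    have hDuh : Continuous fun t : ℝ => fderiv ℝ u (x + t • h) h := by fun_prop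
    rw [intervalIntegral.integral_eq_sub_of_hasDerivAt hline (hDuh.intervalIntegrable 0 1)]
    simp
  have hbound : |u x - u (x + h)| ≤ ∫ t in (0 : ℝ)..1, ‖fderiv ℝ u (x + t • h)‖ * ‖h‖ := by
    rw [abs_sub_comm, hftc, ← Real.norm_eq_abs]
    exact intervalIntegral.norm_integral_le_of_norm_le zero_le_one
      (ae_of_all _ fun t _ => (fderiv ℝ u (x + t • h)).le_opNorm h)
      ((hDu.norm.mul continuous_const).intervalIntegrable _ _)
  rw [intervalIntegral.integral_of_le zero_le_one] at hbound
  exact (ENNReal.ofReal_le_ofReal hbound).trans_eq (ofReal_integral_eq_lintegral_ofReal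
    (hDu.norm.mul continuous_const).integrableOn_Ioc (ae_of_all _ fun t => by positivity))

variable [MeasurableSpace E] [BorelSpace E] (μ : Measure E) [SFinite μ]
  [μ.IsAddRightInvariant]

lemma lintegral_abs_sub_comp_add_le_norm_mul {u : E → ℝ} (hu : ContDiff ℝ 1 u) (h : E) :
    ∫⁻ x, ENNReal.ofReal |u x - u (x + h)| ∂μ ≤
      ENNReal.ofReal ‖h‖ * ∫⁻ x, ENNReal.ofReal ‖fderiv ℝ u x‖ ∂μ := by
  have hDu := hu.continuous_fderiv one_ne_zero
  calc ∫⁻ x, ENNReal.ofReal |u x - u (x + h)| ∂μ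
      ≤ ∫⁻ x, (∫⁻ t in Ioc (0 : ℝ) 1, ENNReal.ofReal (‖fderiv ℝ u (x + t • h)‖ * ‖h‖)) ∂μ :=
        lintegral_mono fun x => ofReal_abs_sub_comp_add_le_lintegral hu x h
    _ = ∫⁻ t in Ioc (0 : ℝ) 1, (∫⁻ x, ENNReal.ofReal (‖fderiv ℝ u (x + t • h)‖ * ‖h‖) ∂μ) :=
        lintegral_lintegral_swap (by fun_prop : Continuous fun p : E × ℝ =>
          ‖fderiv ℝ u (p.1 + p.2 • h)‖ * ‖h‖).measurable.ennreal_ofReal.aemeasurable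
    _ = ∫⁻ _ in Ioc (0 : ℝ) 1, (∫⁻ x, ENNReal.ofReal (‖fderiv ℝ u x‖ * ‖h‖) ∂μ) := by
        simp_rw [lintegral_add_right_eq_self (μ := μ)
          (fun z => ENNReal.ofReal (‖fderiv ℝ u z‖ * ‖h‖))]
    _ = ENNReal.ofReal ‖h‖ * ∫⁻ x, ENNReal.ofReal ‖fderiv ℝ u x‖ ∂μ := by
        simp_rw [ENNReal.ofReal_mul (norm_nonneg _), lintegral_mul_const' _ _ ENNReal.ofReal_ne_top]
        simp [mul_comm]

end Translation

section AddHaar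

variable {E : Type*} [NormedAddCommGroup E] [NormedSpace ℝ E] [FiniteDimensional ℝ E]
  [MeasurableSpace E] [BorelSpace E] (μ : Measure E) [μ.IsAddHaarMeasure]

lemma lintegral_fun_norm_addHaar [Nontrivial E] {f : ℝ → ℝ≥0∞} (hf : Measurable f) :
    ∫⁻ x, f ‖x‖ ∂μ =
      dim E * μ (ball 0 1) * ∫⁻ y in Ioi 0, ENNReal.ofReal (y ^ (dim E - 1)) * f y := by
  have hmeas : Measurable fun p : sphere (0 : E) 1 × Ioi (0 : ℝ) => f p.2 :=
    hf.comp (measurable_subtype_coe.comp measurable_snd)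
  calc
    ∫⁻ x, f ‖x‖ ∂μ = ∫⁻ x : ({0}ᶜ : Set E), f ‖x.1‖ ∂(μ.comap (↑)) := by
      rw [lintegral_subtype_comap (measurableSet_singleton _).compl (fun x => f ‖x‖),
        restrict_compl_singleton]
    _ = ∫⁻ p, f p.2 ∂μ.toSphere.prod (.volumeIoiPow (dim E - 1)) := by
      rw [← μ.measurePreserving_homeomorphUnitSphereProd.lintegral_comp hmeas]
      simp [homeomorphUnitSphereProd]
    _ = μ.toSphere univ * ∫⁻ y, f y ∂(Measure.volumeIoiPow (dim E - 1)) := by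
      simp only [lintegral_prod _ hmeas.aemeasurable, lintegral_const, mul_comm]
    _ = _ := by
      rw [μ.toSphere_apply_univ, Measure.volumeIoiPow,
        lintegral_withDensity_eq_lintegral_mul _
          (measurable_subtype_coe.pow_const _).ennreal_ofReal
          (show Measurable fun y : Ioi (0 : ℝ) => f y from hf.comp measurable_subtype_coe)]
      congr 1
      exact lintegral_subtype_comap measurableSet_Ioi
        fun y => ENNReal.ofReal (y ^ (dim E - 1)) * f y

lemma setLIntegral_fun_norm_addHaar [Nontrivial E] {f : ℝ → ℝ≥0∞} (hf : Measurable f) {S : Set ℝ}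
    (hS : MeasurableSet S) :
    ∫⁻ x in (‖·‖) ⁻¹' S, f ‖x‖ ∂μ =
      dim E * μ (ball 0 1) * ∫⁻ y in S ∩ Ioi 0, ENNReal.ofReal (y ^ (dim E - 1)) * f y := by
  rw [← lintegral_indicator (measurable_norm hS), ← setLIntegral_indicator hS]
  simp only [indicator_mul_right]
  exact lintegral_fun_norm_addHaar μ (hf.indicator hS)

lemma lintegral_ball_norm_rpow_neg [Nontrivial E] {α : ℝ} (hα : α < dim E) :
    ∫⁻ x in ball 0 1, ENNReal.ofReal (‖x‖ ^ (-α)) ∂μ =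
      dim E * μ (ball 0 1) * ENNReal.ofReal (1 / (dim E - α)) := by
  have hball : ball (0 : E) 1 = (‖·‖) ⁻¹' Iio 1 := by ext; simp
  have h1d := lintegral_Ioo_zero_one_rpow (r := (dim E : ℝ) - 1 + -α) (by linarith)
  rw [show (dim E : ℝ) - 1 + -α + 1 = dim E - α by ring] at h1d
  have hradial := setLIntegral_fun_norm_addHaar μ (f := fun y => ENNReal.ofReal (y ^ (-α)))
    (measurable_id.pow_const _).ennreal_ofReal (measurableSet_Iio (a := 1))
  rw [← hball] at hradial
  rw [hradial, Iio_inter_Ioi, ← h1d]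
  congr 1
  exact setLIntegral_congr_fun measurableSet_Ioo fun y hy =>
    ofReal_pow_pred_mul_ofReal_rpow Module.finrank_pos hy.1 _

lemma lintegral_compl_ball_norm_rpow_neg [Nontrivial E] {α : ℝ} (hα : dim E < α) :
    ∫⁻ x in (ball 0 1)ᶜ, ENNReal.ofReal (‖x‖ ^ (-α)) ∂μ =
      dim E * μ (ball 0 1) * ENNReal.ofReal (1 / (α - dim E)) := by
  have hball : (ball (0 : E) 1)ᶜ = (‖·‖) ⁻¹' Ici 1 := by ext; simp
  have h1d := lintegral_Ioi_one_rpow (r := (dim E : ℝ) - 1 + -α) (by linarith)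
  rw [show -1 / ((dim E : ℝ) - 1 + -α + 1) = 1 / (α - dim E) by
    rw [← neg_div_neg_eq]; ring_nf] at h1d
  have hradial := setLIntegral_fun_norm_addHaar μ (f := fun y => ENNReal.ofReal (y ^ (-α)))
    (measurable_id.pow_const _).ennreal_ofReal (measurableSet_Ici (a := 1))
  rw [← hball] at hradial
  rw [hradial, inter_eq_left.2 (Ici_subset_Ioi.2 zero_lt_one),
    Measure.restrict_congr_set Ioi_ae_eq_Ici.symm, ← h1d]
  congr 1
  exact setLIntegral_congr_fun measurableSet_Ioi fun y (hy : 1 < y) =>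
    ofReal_pow_pred_mul_ofReal_rpow Module.finrank_pos (zero_lt_one.trans hy) _

theorem lintegral_lintegral_abs_sub_div_rpow_le {s : ℝ} (hs0 : 0 < s) (hs1 : s < 1)
    {u : E → ℝ} (hu : ContDiff ℝ 1 u) :
    ∫⁻ x, ∫⁻ y, ENNReal.ofReal (|u x - u y| / ‖x - y‖ ^ ((dim E : ℝ) + s)) ∂μ ∂μ ≤
      dim E * μ (ball 0 1) *
        (ENNReal.ofReal (1 / (1 - s)) * ∫⁻ x, ENNReal.ofReal ‖fderiv ℝ u x‖ ∂μ +
          ENNReal.ofReal (2 / s) * ∫⁻ x, ENNReal.ofReal |u x| ∂μ) := by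
  rcases subsingleton_or_nontrivial E with hE | hE
  · simp [Subsingleton.elim _ (0 : E)]
  set p : ℝ := dim E + s with hp
  have hdim : (1 : ℝ) ≤ dim E := by exact_mod_cast Module.finrank_pos
  set D := ∫⁻ x, ENNReal.ofReal ‖fderiv ℝ u x‖ ∂μ
  set U := ∫⁻ x, ENNReal.ofReal |u x| ∂μ
  set J : E → ℝ≥0∞ := fun h => ∫⁻ x, ENNReal.ofReal |u x - u (x + h)| ∂μ
  have hmeas : Measurable
      (Function.uncurry fun x y : E => ENNReal.ofReal (|u x - u y| / ‖x - y‖ ^ p)) := by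
    have := hu.continuous.measurable
    fun_prop
  have hgrad_bound (h : E) :
      J h * ENNReal.ofReal (‖h‖ ^ (-p)) ≤ D * ENNReal.ofReal (‖h‖ ^ (-(p - 1))) :=
    calc J h * ENNReal.ofReal (‖h‖ ^ (-p))
        ≤ ENNReal.ofReal ‖h‖ * D * ENNReal.ofReal (‖h‖ ^ (-p)) := by
          gcongr; exact lintegral_abs_sub_comp_add_le_norm_mul μ hu h
      _ = D * ENNReal.ofReal (‖h‖ ^ (-(p - 1))) := by
          rw [mul_comm _ D, mul_assoc, ← ENNReal.ofReal_mul (norm_nonneg h),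
            ← Real.rpow_one_add' (norm_nonneg h) (by linarith), show 1 + -p = -(p - 1) by ring]
  have habs_bound (h : E) :
      J h * ENNReal.ofReal (‖h‖ ^ (-p)) ≤ 2 * U * ENNReal.ofReal (‖h‖ ^ (-p)) := by
    gcongr; exact lintegral_abs_sub_comp_add_le_two_mul μ hu.continuous.measurable h
  calc ∫⁻ x, ∫⁻ y, ENNReal.ofReal (|u x - u y| / ‖x - y‖ ^ p) ∂μ ∂μ
      = ∫⁻ h, J h * ENNReal.ofReal (‖h‖ ^ (-p)) ∂μ := by
        simp_rw [lintegral_lintegral_eq_lintegral_lintegral_add μ hmeas, sub_add_cancel_left,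
          norm_neg, lintegral_ofReal_div_rpow μ _ (norm_nonneg _)]
        rfl
    _ = (∫⁻ h in ball 0 1, J h * ENNReal.ofReal (‖h‖ ^ (-p)) ∂μ) +
        ∫⁻ h in (ball 0 1)ᶜ, J h * ENNReal.ofReal (‖h‖ ^ (-p)) ∂μ :=
        (lintegral_add_compl _ measurableSet_ball).symm
    _ ≤ (∫⁻ h in ball 0 1, D * ENNReal.ofReal (‖h‖ ^ (-(p - 1))) ∂μ) +
        ∫⁻ h in (ball 0 1)ᶜ, 2 * U * ENNReal.ofReal (‖h‖ ^ (-p)) ∂μ :=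
        add_le_add (lintegral_mono hgrad_bound) (lintegral_mono habs_bound)
    _ = _ := by
        rw [lintegral_const_mul _ (by fun_prop), lintegral_const_mul _ (by fun_prop),
          lintegral_ball_norm_rpow_neg μ (by linarith),
          lintegral_compl_ball_norm_rpow_neg μ (by linarith),
          show (dim E : ℝ) - (p - 1) = 1 - s by ring, show p - dim E = s by ring,
          div_eq_mul_one_div 2 s, ENNReal.ofReal_mul zero_le_two, ENNReal.ofReal_ofNat]
        ring

end AddHaar

theorem gagliardo_additive_estimate {N : ℕ} (s : ℝ) (hs : s ∈ Set.Ioo (0 : ℝ) 1)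
    (u : EuclideanSpace ℝ (Fin N) → ℝ) (hu : ContDiff ℝ 1 u)
    (hcs : HasCompactSupport u) :
    ∫⁻ x, ∫⁻ y, ENNReal.ofReal (|u x - u y| / ‖x - y‖ ^ ((N : ℝ) + s)) ≤
      ENNReal.ofReal ((N : ℝ) *
        (volume (Metric.ball (0 : EuclideanSpace ℝ (Fin N)) 1)).toReal *
        ((1 / (1 - s)) * (∫ x, ‖fderiv ℝ u x‖) + (2 / s) * ∫ x, |u x|)) := by
  obtain ⟨hs0, hs1⟩ := hs
  have hD : ∫⁻ x, ENNReal.ofReal ‖fderiv ℝ u x‖ = ENNReal.ofReal (∫ x, ‖fderiv ℝ u x‖) :=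
    (ofReal_integral_eq_lintegral_ofReal
      ((hu.continuous_fderiv one_ne_zero).norm.integrable_of_hasCompactSupport (hcs.fderiv ℝ).norm)
      (ae_of_all _ fun x => norm_nonneg _)).symm
  have hU : ∫⁻ x, ENNReal.ofReal |u x| = ENNReal.ofReal (∫ x, |u x|) :=
    (ofReal_integral_eq_lintegral_ofReal
      (hu.continuous.abs.integrable_of_hasCompactSupport hcs.abs)
      (ae_of_all _ fun x => abs_nonneg _)).symm
  have hball : (N : ℝ≥0∞) * volume (ball (0 : EuclideanSpace ℝ (Fin N)) 1) =
      ENNReal.ofReal (N * (volume (ball (0 : EuclideanSpace ℝ (Fin N)) 1)).toReal) := by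
    rw [ENNReal.ofReal_mul N.cast_nonneg, ENNReal.ofReal_toReal measure_ball_lt_top.ne,
      ENNReal.ofReal_natCast]
  have h1s : 0 ≤ 1 / (1 - s) := one_div_nonneg.2 (by linarith)
  have hestimate := lintegral_lintegral_abs_sub_div_rpow_le volume hs0 hs1 hu
  rw [finrank_euclideanSpace_fin, hD, hU, hball] at hestimate
  refine hestimate.trans_eq ?_
  rw [← ENNReal.ofReal_mul h1s, ← ENNReal.ofReal_mul (by positivity), ← ENNReal.ofReal_add
    (mul_nonneg h1s (integral_nonneg fun _ => norm_nonneg _)) (by positivity),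
    ← ENNReal.ofReal_mul (by positivity)]
end

section
/- In dimension N = 1, for every s ∈ (0,1) the interpolation inequality [u]_{W^{s,1}(ℝ)} ≤ (2^{1-s}·2/((1-s)s)) |u'|(ℝ)^s ‖u‖_{L^1(ℝ)}^{1-s} holds with equality when u = 1_I is the characteristic function of a bounded interval I. -/
/-!
`|1_I x - 1_I y|` is `1` exactly when one of `x, y` lies in `I = (a, b)` and the other does not,
so by symmetry of the kernel the seminorm is `2 ∫_I ∫_{Iᶜ} |x - y|^(-1-s)`. The inner integral
is `((x - a)^(-s) + (b - x)^(-s)) / s`, and integrating it over `I` gives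
`2 (b - a)^(1-s) / ((1 - s) s)`. Doubling gives `4 (b - a)^(1-s) / ((1 - s) s)`, which is the
right-hand side since `2^(1-s) · 2^s = 2`.
-/

open MeasureTheory Set

lemma abs_indicator_compl_sub_indicator_compl {α : Type*} (E : Set α) (x y : α) :
    |Eᶜ.indicator (fun _ => (1 : ℝ)) x - Eᶜ.indicator (fun _ => (1 : ℝ)) y| =
      |E.indicator (fun _ => (1 : ℝ)) x - E.indicator (fun _ => (1 : ℝ)) y| := by
  rw [indicator_compl, ← abs_neg]
  congr 1
  simp only [Pi.sub_apply]
  ring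

section IndicatorKernel

variable {α : Type*} [MeasurableSpace α] {μ : Measure α} {E : Set α}

lemma lintegral_ofReal_abs_indicator_sub_div_of_mem (hE : MeasurableSet E) (k : α → ℝ)
    {x : α} (hx : x ∈ E) :
    ∫⁻ y, ENNReal.ofReal (|E.indicator (fun _ => (1 : ℝ)) x -
        E.indicator (fun _ => (1 : ℝ)) y| / k y) ∂μ =
      ∫⁻ y in Eᶜ, ENNReal.ofReal (1 / k y) ∂μ := by
  rw [← lintegral_indicator hE.compl]
  congr 1 with y
  by_cases hy : y ∈ E <;> simp [hx, hy]

theorem lintegral_lintegral_ofReal_abs_indicator_sub_div [SFinite μ] (hE : MeasurableSet E)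
    {k : α → α → ℝ} (hk : Measurable (Function.uncurry k)) (hk_symm : ∀ x y, k x y = k y x) :
    ∫⁻ x, ∫⁻ y, ENNReal.ofReal (|E.indicator (fun _ => (1 : ℝ)) x -
        E.indicator (fun _ => (1 : ℝ)) y| / k x y) ∂μ ∂μ =
      2 * ∫⁻ x in E, ∫⁻ y in Eᶜ, ENNReal.ofReal (1 / k x y) ∂μ ∂μ := by
  have hcompl : ∫⁻ x in Eᶜ, ∫⁻ y in E, ENNReal.ofReal (1 / k x y) ∂μ ∂μ =
      ∫⁻ x in E, ∫⁻ y in Eᶜ, ENNReal.ofReal (1 / k x y) ∂μ ∂μ := by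
    rw [lintegral_lintegral_swap (Measurable.aemeasurable (by fun_prop))]
    simp_rw [hk_symm]
  rw [← lintegral_add_compl _ hE, two_mul]
  congr 1
  · exact setLIntegral_congr_fun hE fun x hx =>
      lintegral_ofReal_abs_indicator_sub_div_of_mem hE _ hx
  · rw [← hcompl]
    refine setLIntegral_congr_fun hE.compl fun x hx => ?_
    simp_rw [← abs_indicator_compl_sub_indicator_compl E x]
    rw [lintegral_ofReal_abs_indicator_sub_div_of_mem hE.compl _ hx, compl_compl]

end IndicatorKernel

lemma lintegral_Ici_rpow_neg_one_sub {s c : ℝ} (hs : 0 < s) (hc : 0 < c) :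
    ∫⁻ t in Ici c, ENNReal.ofReal (t ^ (-(1 + s))) = ENNReal.ofReal (c ^ (-s) / s) := by
  rw [setLIntegral_congr Ioi_ae_eq_Ici.symm, ← ofReal_integral_eq_lintegral_ofReal
      (integrableOn_Ioi_rpow_of_lt (by linarith) hc)
      ((ae_restrict_mem measurableSet_Ioi).mono fun t ht =>
        Real.rpow_nonneg (hc.trans ht).le _),
    integral_Ioi_rpow_of_lt (by linarith) hc]
  ring_nf

lemma lintegral_Iic_one_div_abs_sub_rpow {s a x : ℝ} (hs : 0 < s) (hax : a < x) :
    ∫⁻ y in Iic a, ENNReal.ofReal (1 / |x - y| ^ (1 + s)) =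
      ENNReal.ofReal ((x - a) ^ (-s) / s) := by
  rw [setLIntegral_congr_fun measurableSet_Iic fun y (hy : y ≤ a) => by
      rw [abs_of_pos (by linarith : 0 < x - y), one_div, ← Real.rpow_neg (by linarith)],
    (Measure.measurePreserving_sub_left volume x).setLIntegral_comp_emb
      (MeasurableEquiv.subLeft x).measurableEmbedding fun t => ENNReal.ofReal (t ^ (-(1 + s))),
    image_const_sub_Iic]
  exact lintegral_Ici_rpow_neg_one_sub hs (sub_pos.mpr hax)

lemma lintegral_Ici_one_div_abs_sub_rpow {s b x : ℝ} (hs : 0 < s) (hxb : x < b) :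
    ∫⁻ y in Ici b, ENNReal.ofReal (1 / |x - y| ^ (1 + s)) =
      ENNReal.ofReal ((b - x) ^ (-s) / s) := by
  rw [setLIntegral_congr_fun measurableSet_Ici fun y (hy : b ≤ y) => by
      rw [abs_sub_comm, abs_of_pos (by linarith : 0 < y - x), one_div,
        ← Real.rpow_neg (by linarith)],
    (measurePreserving_sub_right volume x).setLIntegral_comp_emb
      (MeasurableEquiv.subRight x).measurableEmbedding fun t => ENNReal.ofReal (t ^ (-(1 + s))),
    image_sub_const_Ici]
  exact lintegral_Ici_rpow_neg_one_sub hs (sub_pos.mpr hxb)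

lemma lintegral_compl_Ioo_one_div_abs_sub_rpow {s a b x : ℝ} (hs : 0 < s) (hx : x ∈ Ioo a b) :
    ∫⁻ y in (Ioo a b)ᶜ, ENNReal.ofReal (1 / |x - y| ^ (1 + s)) =
      ENNReal.ofReal (((x - a) ^ (-s) + (b - x) ^ (-s)) / s) := by
  have hdisj : Disjoint (Iic a) (Ici b) := Iic_disjoint_Ici.mpr (not_le.mpr (hx.1.trans hx.2))
  have hnonneg {t : ℝ} (ht : 0 < t) : 0 ≤ t ^ (-s) / s := by positivity
  rw [← Ioi_inter_Iio, compl_inter, compl_Ioi, compl_Iio, lintegral_union measurableSet_Ici hdisj,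
    lintegral_Iic_one_div_abs_sub_rpow hs hx.1, lintegral_Ici_one_div_abs_sub_rpow hs hx.2,
    ← ENNReal.ofReal_add (hnonneg (sub_pos.mpr hx.1)) (hnonneg (sub_pos.mpr hx.2)), add_div]

section SubRpow

variable {s : ℝ} (a b : ℝ)

lemma intervalIntegrable_sub_rpow_neg (hs : s < 1) :
    IntervalIntegrable (fun x => (x - a) ^ (-s)) volume a b := by
  simpa using (intervalIntegral.intervalIntegrable_rpow' (a := 0) (b := b - a)
    (by linarith : -1 < -s)).comp_sub_right a

lemma intervalIntegrable_rpow_neg_sub (hs : s < 1) :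
    IntervalIntegrable (fun x => (b - x) ^ (-s)) volume a b := by
  simpa using (intervalIntegral.intervalIntegrable_rpow' (a := b - a) (b := 0)
    (by linarith : -1 < -s)).comp_sub_left b

lemma intervalIntegral_sub_rpow_neg_add_rpow_neg_sub (hs : s < 1) :
    ∫ x in a..b, ((x - a) ^ (-s) + (b - x) ^ (-s)) = 2 * (b - a) ^ (1 - s) / (1 - s) := by
  rw [intervalIntegral.integral_add (intervalIntegrable_sub_rpow_neg a b hs)
      (intervalIntegrable_rpow_neg_sub a b hs),
    intervalIntegral.integral_comp_sub_right (fun t => t ^ (-s)),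
    intervalIntegral.integral_comp_sub_left (fun t => t ^ (-s)), sub_self, sub_self,
    integral_rpow (Or.inl (by linarith)),
    Real.zero_rpow (by linarith)]
  ring_nf

end SubRpow

lemma lintegral_Ioo_lintegral_compl_Ioo_one_div_abs_sub_rpow {s a b : ℝ} (hs : s ∈ Ioo 0 1)
    (hab : a < b) :
    ∫⁻ x in Ioo a b, ∫⁻ y in (Ioo a b)ᶜ, ENNReal.ofReal (1 / |x - y| ^ (1 + s)) =
      ENNReal.ofReal (2 * (b - a) ^ (1 - s) / ((1 - s) * s)) := by
  have hint : IntegrableOn (fun x => ((x - a) ^ (-s) + (b - x) ^ (-s)) / s) (Ioo a b) := by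
    have hsum := (intervalIntegrable_iff_integrableOn_Ioc_of_le hab.le).mp
      ((intervalIntegrable_sub_rpow_neg a b hs.2).add (intervalIntegrable_rpow_neg_sub a b hs.2))
    exact (hsum.mono_set Ioo_subset_Ioc_self).div_const s
  rw [setLIntegral_congr_fun measurableSet_Ioo fun x hx =>
      lintegral_compl_Ioo_one_div_abs_sub_rpow hs.1 hx,
    ← ofReal_integral_eq_lintegral_ofReal hint
      ((ae_restrict_mem measurableSet_Ioo).mono fun x hx => by
        have := sub_pos.mpr hx.1; have := sub_pos.mpr hx.2; have := hs.1; positivity),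
    integral_div, ← integral_Ioc_eq_integral_Ioo, ← intervalIntegral.integral_of_le hab.le,
    intervalIntegral_sub_rpow_neg_add_rpow_neg_sub a b hs.2, div_div]

theorem interpolation_equality_interval (s : ℝ) (hs : s ∈ Set.Ioo (0 : ℝ) 1)
    (a b : ℝ) (hab : a < b) :
    ∫⁻ x, ∫⁻ y,
        ENNReal.ofReal (|(Set.Ioo a b).indicator (fun _ => (1 : ℝ)) x -
          (Set.Ioo a b).indicator (fun _ => (1 : ℝ)) y| / |x - y| ^ (1 + s)) =
      ENNReal.ofReal ((2 : ℝ) ^ (1 - s) * 2 / ((1 - s) * s) *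
        (2 : ℝ) ^ s * (b - a) ^ (1 - s)) := by
  rw [lintegral_lintegral_ofReal_abs_indicator_sub_div measurableSet_Ioo (by fun_prop)
      fun x y => by rw [abs_sub_comm],
    lintegral_Ioo_lintegral_compl_Ioo_one_div_abs_sub_rpow hs hab,
    ← ENNReal.ofReal_ofNat 2, ← ENNReal.ofReal_mul zero_le_two]
  have h2 : (2 : ℝ) ^ (1 - s) * 2 ^ s = 2 := by
    rw [← Real.rpow_add two_pos]; norm_num
  congr 1
  linear_combination (2 * (b - a) ^ (1 - s) / ((1 - s) * s)) * h2.symm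
end

section
/- Let Ω ⊂ ℝ^N be open and bounded, s ∈ (0,1), and define the s-Cheeger constant h_s(Ω) = inf{P_s(E)/|E| : E ⊂ Ω Borel, |E| > 0}. Then for every measurable u with ∫∫ |u(x)-u(y)|/|x-y|^{N+s} dx dy < ∞ and u = 0 a.e. outside Ω, u nonzero in L^1(Ω), one has [u]_{W^{s,1}(ℝ^N)} / ‖u‖_{L^1(Ω)} ≥ h_s(Ω). -/
open MeasureTheory ENNReal Set

/-- The fractional `s`-perimeter of a set `E ⊆ ℝ^N`. -/
noncomputable def sPerimeter {N : ℕ} (s : ℝ) (E : Set (EuclideanSpace ℝ (Fin N))) : ℝ≥0∞ :=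
  ∫⁻ x, ∫⁻ y,
    ENNReal.ofReal (|E.indicator (fun _ => (1 : ℝ)) x - E.indicator (fun _ => (1 : ℝ)) y| /
      ‖x - y‖ ^ ((N : ℝ) + s))

/-- The `s`-Cheeger constant of `Ω`. -/
noncomputable def sCheeger {N : ℕ} (s : ℝ) (Ω : Set (EuclideanSpace ℝ (Fin N))) : ℝ≥0∞ :=
  ⨅ E ∈ {E : Set (EuclideanSpace ℝ (Fin N)) | E ⊆ Ω ∧ MeasurableSet E ∧ 0 < volume E},
    sPerimeter s E / volume E

/-!
Since `u = 0` a.e. off `Ω`, `v = 1_Ω |u|` agrees with `|u|` a.e., and its superlevel sets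
`E_t = {v > t}`, `t > 0`, lie in `Ω`, so `h_s(Ω) |E_t| ≤ P_s(E_t)`. Integrating over `t > 0`,
Cavalieri's formula turns the left side into `h_s(Ω) ‖u‖_{L¹(Ω)}`, and the nonlocal coarea formula
`∫_0^∞ P_s(E_t) dt = [v]_{W^{s,1}}` turns the right side into `[|u|]_{W^{s,1}} ≤ [u]_{W^{s,1}}`.
The coarea formula is Tonelli plus the one-dimensional identity
`∫_0^∞ |1_{t < a} - 1_{t < b}| dt = |a - b|` for `a, b ≥ 0`.
-/

open Function
open scoped symmDiff

theorem lintegral_Ioi_abs_indicator_Iio_sub {a b : ℝ} (ha : 0 ≤ a) (hb : 0 ≤ b) :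
    ∫⁻ t in Ioi 0, ENNReal.ofReal
      |(Iio a).indicator (fun _ => (1 : ℝ)) t - (Iio b).indicator (fun _ => (1 : ℝ)) t| =
      ENNReal.ofReal |a - b| := by
  wlog hab : a ≤ b generalizing a b
  · simpa only [abs_sub_comm] using this hb ha (le_of_not_ge hab)
  have hsymm : Iio a ∆ Iio b = Ico a b := by
    rw [symmDiff_of_le (Iio_subset_Iio hab)]
    ext t; simp
  simp_rw [← abs_indicator_symmDiff, hsymm, ← Real.enorm_eq_ofReal_abs,
    enorm_indicator_eq_indicator_enorm, enorm_one]
  rw [lintegral_indicator_const measurableSet_Ico, one_mul, restrict_Ioi_eq_restrict_Ici,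
    Measure.restrict_apply measurableSet_Ico,
    inter_eq_left.mpr (Ico_subset_Ici_self.trans (Ici_subset_Ici.mpr ha)), Real.volume_Ico,
    Real.enorm_eq_ofReal_abs, abs_sub_comm, abs_of_nonneg (sub_nonneg.mpr hab)]

theorem setOf_lt_indicator_subset {α M : Type*} [Zero M] [Preorder M] {s : Set α}
    {f : α → M} {t : M} (ht : 0 ≤ t) : {x | t < s.indicator f x} ⊆ s := by
  intro x (hx : t < s.indicator f x)
  by_contra hxs
  rw [indicator_of_notMem hxs] at hx
  exact hx.not_ge ht

section NonlocalEnergy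

variable {X : Type*} [MeasurableSpace X] (μ : Measure X)

noncomputable def nonlocalEnergy (k : X → X → ℝ) (f : X → ℝ) : ℝ≥0∞ :=
  ∫⁻ x, ∫⁻ y, ENNReal.ofReal (|f x - f y| / k x y) ∂μ ∂μ

variable {μ} {k : X → X → ℝ}

theorem nonlocalEnergy_congr_ae {f g : X → ℝ} (hfg : f =ᵐ[μ] g) :
    nonlocalEnergy μ k f = nonlocalEnergy μ k g := by
  refine lintegral_congr_ae ?_
  filter_upwards [hfg] with x hx
  refine lintegral_congr_ae ?_
  filter_upwards [hfg] with y hy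
  rw [hx, hy]

theorem nonlocalEnergy_abs_le (hk : ∀ x y, 0 ≤ k x y) (f : X → ℝ) :
    nonlocalEnergy μ k (fun x => |f x|) ≤ nonlocalEnergy μ k f :=
  lintegral_mono fun x => lintegral_mono fun y => ENNReal.ofReal_le_ofReal <|
    div_le_div_of_nonneg_right (abs_abs_sub_abs_le_abs_sub _ _) (hk x y)

theorem lintegral_nonlocalEnergy_indicator_superlevelSet [SFinite μ]
    (hk : Measurable (uncurry k)) {f : X → ℝ} (hf : Measurable f) (hf0 : 0 ≤ f) :
    ∫⁻ t in Ioi 0, nonlocalEnergy μ k ({x | t < f x}.indicator fun _ => 1) =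
      nonlocalEnergy μ k f := by
  set F : ℝ → X → X → ℝ≥0∞ := fun t x y => ENNReal.ofReal
    (|{z | t < f z}.indicator (fun _ => (1 : ℝ)) x - {z | t < f z}.indicator (fun _ => 1) y| /
      k x y)
  have hind : Measurable fun q : ℝ × X => {z | q.1 < f z}.indicator (fun _ => (1 : ℝ)) q.2 :=
    measurable_const.indicator (s := {q : ℝ × X | q.1 < f q.2})
      (measurableSet_lt measurable_fst (hf.comp measurable_snd))
  have hF : Measurable fun p : (ℝ × X) × X => F p.1.1 p.1.2 p.2 :=
    (((hind.comp (measurable_fst.fst.prodMk measurable_fst.snd)).sub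
      (hind.comp (measurable_fst.fst.prodMk measurable_snd))).abs.div
        (hk.comp (measurable_fst.snd.prodMk measurable_snd))).ennreal_ofReal
  have hF_layer : ∀ x y, ∫⁻ t in Ioi 0, F t x y = ENNReal.ofReal (|f x - f y| / k x y) := by
    intro x y
    simp only [F, div_eq_mul_inv, ENNReal.ofReal_mul (abs_nonneg _)]
    rw [lintegral_mul_const' _ _ ofReal_ne_top]
    exact congrArg (· * _) (lintegral_Ioi_abs_indicator_Iio_sub (hf0 x) (hf0 y))
  calc ∫⁻ t in Ioi (0 : ℝ), ∫⁻ x, ∫⁻ y, F t x y ∂μ ∂μ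
      = ∫⁻ x, (∫⁻ t in Ioi (0 : ℝ), ∫⁻ y, F t x y ∂μ) ∂μ :=
        lintegral_lintegral_swap hF.lintegral_prod_right'.aemeasurable
    _ = ∫⁻ x, ∫⁻ y, (∫⁻ t in Ioi (0 : ℝ), F t x y) ∂μ ∂μ :=
        lintegral_congr fun x => lintegral_lintegral_swap (f := fun t y => F t x y)
          (hF.comp (f := fun q : ℝ × X => ((q.1, x), q.2)) (by fun_prop)).aemeasurable
    _ = nonlocalEnergy μ k f := by simp only [hF_layer, nonlocalEnergy]

end NonlocalEnergy

theorem sCheeger_mul_volume_le {N : ℕ} {s : ℝ} {Ω E : Set (EuclideanSpace ℝ (Fin N))}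
    (hEΩ : E ⊆ Ω) (hE : MeasurableSet E) : sCheeger s Ω * volume E ≤ sPerimeter s E := by
  rcases eq_zero_or_pos (volume E) with hE0 | hE0
  · simp [hE0]
  · exact ENNReal.mul_le_of_le_div (iInf₂_le E ⟨hEΩ, hE, hE0⟩)

theorem gagliardo_ratio_ge_cheeger_general {N : ℕ} (s : ℝ)
    (Ω : Set (EuclideanSpace ℝ (Fin N))) (hΩo : IsOpen Ω)
    (u : EuclideanSpace ℝ (Fin N) → ℝ) (hm : Measurable u)
    (hfin : (∫⁻ x, ∫⁻ y, ENNReal.ofReal (|u x - u y| / ‖x - y‖ ^ ((N : ℝ) + s))) ≠ ⊤)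
    (hzero : ∀ᵐ x ∂volume, x ∉ Ω → u x = 0)
    (hne : (∫⁻ x in Ω, ENNReal.ofReal |u x|) ≠ 0) :
    (∫⁻ x, ∫⁻ y, ENNReal.ofReal (|u x - u y| / ‖x - y‖ ^ ((N : ℝ) + s))) /
        (∫⁻ x in Ω, ENNReal.ofReal |u x|) ≥ sCheeger s Ω := by
  set k := fun x y : EuclideanSpace ℝ (Fin N) => ‖x - y‖ ^ ((N : ℝ) + s)
  set v := Ω.indicator fun x => |u x|
  have hv : Measurable v := hm.abs.indicator hΩo.measurableSet
  have hv0 : 0 ≤ v := indicator_nonneg fun x _ => abs_nonneg (u x)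
  have hv_ae : v =ᵐ[volume] fun x => |u x| := by
    filter_upwards [hzero] with x hx
    by_cases hxΩ : x ∈ Ω <;> simp [v, hxΩ, hx]
  have hcavalieri : ∫⁻ x in Ω, ENNReal.ofReal |u x| = ∫⁻ t in Ioi 0, volume {x | t < v x} := by
    rw [← lintegral_eq_lintegral_meas_lt _ (ae_of_all _ hv0) hv.aemeasurable,
      ← lintegral_indicator hΩo.measurableSet]
    exact congrArg (lintegral volume) (indicator_comp_of_zero ENNReal.ofReal_zero)
  rw [ge_iff_le, ENNReal.le_div_iff_mul_le (Or.inl hne) (Or.inr hfin), hcavalieri]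
  calc sCheeger s Ω * ∫⁻ t in Ioi 0, volume {x | t < v x}
      ≤ ∫⁻ t in Ioi 0, sCheeger s Ω * volume {x | t < v x} := lintegral_const_mul_le _ _
    _ ≤ ∫⁻ t in Ioi 0, sPerimeter s {x | t < v x} :=
        setLIntegral_mono' measurableSet_Ioi fun t ht =>
          sCheeger_mul_volume_le (setOf_lt_indicator_subset (le_of_lt ht))
            (measurableSet_lt measurable_const hv)
    _ = nonlocalEnergy volume k v :=
        lintegral_nonlocalEnergy_indicator_superlevelSet (by fun_prop) hv hv0
    _ = nonlocalEnergy volume k fun x => |u x| := nonlocalEnergy_congr_ae hv_ae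
    _ ≤ nonlocalEnergy volume k u :=
        nonlocalEnergy_abs_le (fun x y => Real.rpow_nonneg (norm_nonneg _) _) u

theorem gagliardo_ratio_ge_cheeger {N : ℕ} (s : ℝ) (hs : s ∈ Set.Ioo (0 : ℝ) 1)
    (Ω : Set (EuclideanSpace ℝ (Fin N))) (hΩo : IsOpen Ω) (hΩb : Bornology.IsBounded Ω)
    (u : EuclideanSpace ℝ (Fin N) → ℝ) (hm : Measurable u)
    (hfin : (∫⁻ x, ∫⁻ y, ENNReal.ofReal (|u x - u y| / ‖x - y‖ ^ ((N : ℝ) + s))) ≠ ⊤)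
    (hzero : ∀ᵐ x ∂volume, x ∉ Ω → u x = 0)
    (hne : (∫⁻ x in Ω, ENNReal.ofReal |u x|) ≠ 0) :
    (∫⁻ x, ∫⁻ y, ENNReal.ofReal (|u x - u y| / ‖x - y‖ ^ ((N : ℝ) + s))) /
        (∫⁻ x in Ω, ENNReal.ofReal |u x|) ≥ sCheeger s Ω :=
  gagliardo_ratio_ge_cheeger_general s Ω hΩo u hm hfin hzero hne
end

section
/- Let 1 ≤ p < ∞, 0 < s < 1, and let u ∈ C^∞_c(ℝ^N). Then for every nonzero h ∈ ℝ^N, ∫_{ℝ^N} |u(x+h) - u(x)|^p / |h|^{sp} dx ≤ C(N,p) · (1-s) · ∫∫_{ℝ^N×ℝ^N} |u(x)-u(y)|^p/|x-y|^{N+sp} dx dy, for a constant C depending only on N and p (in particular independent of s and h). -/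
open MeasureTheory Metric ENNReal

namespace Nikolskii

noncomputable section

variable {N : ℕ}

def Fd (u : EuclideanSpace ℝ (Fin N) → ℝ) (p : ℝ) (g : EuclideanSpace ℝ (Fin N)) : ℝ≥0∞ :=
  ∫⁻ x, ENNReal.ofReal (|u (x + g) - u x| ^ p)

variable {u : EuclideanSpace ℝ (Fin N) → ℝ} {p e : ℝ}

lemma cont_abs_rpow (hp : 0 < p) : Continuous fun t : ℝ => |t| ^ p := by
  rw [continuous_iff_continuousAt]
  intro t
  exact (Real.continuousAt_rpow_const _ _ (Or.inr hp.le)).comp continuous_abs.continuousAt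

lemma measAB (hu : Continuous u) (hp : 0 < p) (a b : EuclideanSpace ℝ (Fin N)) :
    Measurable fun x => ENNReal.ofReal (|u (x + a) - u (x + b)| ^ p) :=
  (ENNReal.continuous_ofReal.comp <| (cont_abs_rpow hp).comp <|
    ((hu.comp (continuous_id.add continuous_const)).sub
      (hu.comp (continuous_id.add continuous_const)))).measurable

lemma measA (hu : Continuous u) (hp : 0 < p) (a : EuclideanSpace ℝ (Fin N)) :
    Measurable fun x => ENNReal.ofReal (|u (x + a) - u x| ^ p) :=
  (ENNReal.continuous_ofReal.comp <| (cont_abs_rpow hp).comp <|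
    ((hu.comp (continuous_id.add continuous_const)).sub hu)).measurable

lemma measurable_Fd (hu : Continuous u) (hp : 0 < p) : Measurable (Fd u p) := by
  apply Measurable.lintegral_prod_right'
    (f := fun q : (EuclideanSpace ℝ (Fin N)) × (EuclideanSpace ℝ (Fin N)) =>
      ENNReal.ofReal (|u (q.2 + q.1) - u q.2| ^ p))
  exact (ENNReal.continuous_ofReal.comp <| (cont_abs_rpow hp).comp <|
    ((hu.comp (continuous_snd.add continuous_fst)).sub (hu.comp continuous_snd))).measurable

lemma real_two_term {a b : ℝ} (hp : 1 ≤ p) (ha : 0 ≤ a) (hb : 0 ≤ b) :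
    (a + b) ^ p ≤ 2 ^ (p - 1) * (a ^ p + b ^ p) := by
  have key := NNReal.rpow_add_le_mul_rpow_add_rpow a.toNNReal b.toNNReal hp
  have h2 : ((a.toNNReal + b.toNNReal : NNReal) : ℝ) = a + b := by
    simp [Real.coe_toNNReal, ha, hb]
  calc (a + b) ^ p = ((a.toNNReal + b.toNNReal : NNReal) : ℝ) ^ p := by rw [h2]
    _ ≤ _ := by
        rw [← NNReal.coe_rpow]
        refine le_trans (NNReal.coe_le_coe.2 key) ?_
        push_cast [NNReal.coe_rpow]
        simp [Real.coe_toNNReal, ha, hb]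

lemma Fd_le (hu : Continuous u) (hp : 1 ≤ p) (h g : EuclideanSpace ℝ (Fin N)) :
    Fd u p h ≤ ENNReal.ofReal (2 ^ (p - 1)) * (Fd u p (h - g) + Fd u p g) := by
  have hp0 : (0:ℝ) < p := lt_of_lt_of_le one_pos hp
  have key : ∀ x : EuclideanSpace ℝ (Fin N), ENNReal.ofReal (|u (x + h) - u x| ^ p) ≤
      ENNReal.ofReal (2 ^ (p-1)) *
        (ENNReal.ofReal (|u (x + g + (h - g)) - u (x + g)| ^ p) +
         ENNReal.ofReal (|u (x + g) - u x| ^ p)) := by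
    intro x
    rw [← ENNReal.ofReal_add (by positivity) (by positivity),
      ← ENNReal.ofReal_mul (by positivity)]
    apply ENNReal.ofReal_le_ofReal
    have hxg : x + g + (h - g) = x + h := by abel
    have tri : |u (x + h) - u x| ≤ |u (x + g + (h - g)) - u (x + g)| + |u (x + g) - u x| := by
      rw [hxg]; exact abs_sub_le _ _ _
    calc |u (x + h) - u x| ^ p
        ≤ (|u (x + g + (h - g)) - u (x + g)| + |u (x + g) - u x|) ^ p :=
          Real.rpow_le_rpow (abs_nonneg _) tri hp0.le
      _ ≤ _ := real_two_term hp (abs_nonneg _) (abs_nonneg _)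
  have m1 : Measurable fun x : EuclideanSpace ℝ (Fin N) =>
      ENNReal.ofReal (|u (x + g + (h - g)) - u (x + g)| ^ p) := by
    have := measAB hu hp0 (g + (h - g)) g
    simpa [add_assoc] using this
  have m2 := measA hu hp0 g
  calc Fd u p h ≤ ∫⁻ x, ENNReal.ofReal (2 ^ (p-1)) *
        (ENNReal.ofReal (|u (x + g + (h - g)) - u (x + g)| ^ p) +
         ENNReal.ofReal (|u (x + g) - u x| ^ p)) := lintegral_mono key
    _ = ENNReal.ofReal (2 ^ (p-1)) *
        ((∫⁻ x, ENNReal.ofReal (|u (x + g + (h - g)) - u (x + g)| ^ p)) +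
         ∫⁻ x, ENNReal.ofReal (|u (x + g) - u x| ^ p)) := by
        rw [lintegral_const_mul' _ _ ENNReal.ofReal_ne_top, lintegral_add_left m1]
    _ = ENNReal.ofReal (2 ^ (p-1)) * (Fd u p (h - g) + Fd u p g) := by
        congr 2
        exact lintegral_add_right_eq_self
          (fun y => ENNReal.ofReal (|u (y + (h - g)) - u y| ^ p)) g

lemma Fd_double (hu : Continuous u) (hp : 1 ≤ p) (g : EuclideanSpace ℝ (Fin N)) :
    Fd u p (g + g) ≤ ENNReal.ofReal (2 ^ p) * Fd u p g := by
  have h1 := Fd_le hu hp (g + g) g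
  have h2 : g + g - g = g := by abel
  rw [h2] at h1
  refine h1.trans (le_of_eq ?_)
  calc ENNReal.ofReal (2 ^ (p-1)) * (Fd u p g + Fd u p g)
      = (ENNReal.ofReal (2 ^ (p-1)) * ENNReal.ofReal 2) * Fd u p g := by
        rw [← two_mul (Fd u p g), ENNReal.ofReal_ofNat, mul_assoc]
    _ = ENNReal.ofReal (2 ^ p) * Fd u p g := by
        rw [← ENNReal.ofReal_mul (by positivity)]
        congr 2
        rw [Real.rpow_sub two_pos]
        field_simp
        norm_num

lemma Fd_pow (hu : Continuous u) (hp : 1 ≤ p) (g : EuclideanSpace ℝ (Fin N)) (m : ℕ) :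
    Fd u p ((2 ^ m : ℝ) • g) ≤ ENNReal.ofReal ((2:ℝ) ^ (p * m)) * Fd u p g := by
  induction m with
  | zero => simp [one_smul]
  | succ m ih =>
      have hsp : ((2:ℝ) ^ (m+1)) • g = (2 ^ m : ℝ) • g + (2 ^ m : ℝ) • g := by
        rw [← add_smul]; ring_nf
      rw [hsp]
      calc Fd u p ((2 ^ m : ℝ) • g + (2 ^ m : ℝ) • g)
          ≤ ENNReal.ofReal (2 ^ p) * Fd u p ((2 ^ m : ℝ) • g) := Fd_double hu hp _
        _ ≤ ENNReal.ofReal (2 ^ p) * (ENNReal.ofReal ((2:ℝ) ^ (p * m)) * Fd u p g) :=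
            mul_le_mul_right ih _
        _ = ENNReal.ofReal ((2:ℝ) ^ (p * (m+1 : ℕ))) * Fd u p g := by
            rw [← mul_assoc, ← ENNReal.ofReal_mul (by positivity), ← Real.rpow_add two_pos]
            congr 3
            push_cast
            ring

lemma measW (he : 0 ≤ e) (hu : Continuous u) (hp : 0 < p) :
    Measurable fun g : EuclideanSpace ℝ (Fin N) =>
      Fd u p g * ENNReal.ofReal ((‖g‖ ^ e)⁻¹) :=
  (measurable_Fd hu hp).mul
    ((continuous_norm.rpow_const fun _ => Or.inr he).measurable.inv.ennreal_ofReal)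

lemma G_eq (hu : Continuous u) (hp : 0 < p) {e : ℝ} (he : 0 ≤ e) :
    (∫⁻ x, ∫⁻ y, ENNReal.ofReal (|u x - u y| ^ p / ‖x - y‖ ^ e)) =
      ∫⁻ g, Fd u p g * ENNReal.ofReal ((‖g‖ ^ e)⁻¹) := by
  have step1 : ∀ x : EuclideanSpace ℝ (Fin N),
      (∫⁻ y, ENNReal.ofReal (|u x - u y| ^ p / ‖x - y‖ ^ e)) =
      ∫⁻ g, ENNReal.ofReal (|u (x + g) - u x| ^ p) * ENNReal.ofReal ((‖g‖ ^ e)⁻¹) := by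
    intro x
    rw [← lintegral_add_left_eq_self
      (fun y => ENNReal.ofReal (|u x - u y| ^ p / ‖x - y‖ ^ e)) x]
    apply lintegral_congr
    intro g
    have h1 : x - (x + g) = -g := by abel
    rw [h1, norm_neg, div_eq_mul_inv, ENNReal.ofReal_mul (by positivity), abs_sub_comm]
  simp_rw [step1]
  rw [lintegral_lintegral_swap]
  · apply lintegral_congr
    intro g
    exact lintegral_mul_const _ (measA hu hp g)
  · apply Measurable.aemeasurable
    refine Measurable.mul
      (f := fun q : EuclideanSpace ℝ (Fin N) × EuclideanSpace ℝ (Fin N) =>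
        ENNReal.ofReal (|u (q.1 + q.2) - u q.1| ^ p))
      (g := fun q : EuclideanSpace ℝ (Fin N) × EuclideanSpace ℝ (Fin N) =>
        ENNReal.ofReal ((‖q.2‖ ^ e)⁻¹)) ?_ ?_
    · exact (ENNReal.continuous_ofReal.comp <| (cont_abs_rpow hp).comp <|
        ((hu.comp (continuous_fst.add continuous_snd)).sub (hu.comp continuous_fst))).measurable
    · exact ((continuous_norm.rpow_const fun _ => Or.inr he).measurable.inv.ennreal_ofReal).comp
        measurable_snd

lemma ball_norm_bounds {c g : EuclideanSpace ℝ (Fin N)}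
    (hg : g ∈ ball ((2:ℝ)⁻¹ • c) (‖c‖/8)) :
    3/8 * ‖c‖ ≤ ‖g‖ ∧ ‖g‖ ≤ 5/8 * ‖c‖ := by
  have hd : ‖g - (2:ℝ)⁻¹ • c‖ < ‖c‖/8 := by rwa [mem_ball, dist_eq_norm] at hg
  have h2 : ‖(2:ℝ)⁻¹ • c‖ = ‖c‖/2 := by
    rw [norm_smul, norm_inv, Real.norm_ofNat]
    ring
  constructor
  · have h3 := norm_sub_norm_le ((2:ℝ)⁻¹ • c) g
    rw [norm_sub_rev] at h3
    linarith
  · have h4 : g = (2:ℝ)⁻¹ • c + (g - (2:ℝ)⁻¹ • c) := by abel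
    calc ‖g‖ = ‖(2:ℝ)⁻¹ • c + (g - (2:ℝ)⁻¹ • c)‖ := by rw [← h4]
      _ ≤ ‖(2:ℝ)⁻¹ • c‖ + ‖g - (2:ℝ)⁻¹ • c‖ := norm_add_le _ _
      _ ≤ 5/8 * ‖c‖ := by rw [h2]; linarith

lemma avg (hu : Continuous u) (hp : 1 ≤ p) {e : ℝ} (he : 0 ≤ e)
    (c : EuclideanSpace ℝ (Fin N)) (hc : c ≠ 0) :
    volume (ball ((2:ℝ)⁻¹ • c) (‖c‖/8)) * Fd u p c ≤
      ENNReal.ofReal (2 ^ p * ‖c‖ ^ e) *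
        ∫⁻ g in ball ((2:ℝ)⁻¹ • c) (‖c‖/8), Fd u p g * ENNReal.ofReal ((‖g‖ ^ e)⁻¹) := by
  have hp0 : (0:ℝ) < p := lt_of_lt_of_le one_pos hp
  have hcpos : 0 < ‖c‖ := norm_pos_iff.2 hc
  set B := ball ((2:ℝ)⁻¹ • c) (‖c‖/8) with hBdef
  have mFd := measurable_Fd hu hp0
  have mW := measW he hu hp0 (u := u)
  have mR : Measurable fun g : EuclideanSpace ℝ (Fin N) => Fd u p (c - g) :=
    mFd.comp (measurable_const.sub measurable_id)
  have s1 : volume B * Fd u p c = ∫⁻ _ in B, Fd u p c := by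
    rw [setLIntegral_const, mul_comm]
  have s2 : (∫⁻ _ in B, Fd u p c) ≤
      ∫⁻ g in B, ENNReal.ofReal (2 ^ (p-1)) * (Fd u p (c - g) + Fd u p g) :=
    lintegral_mono fun g => Fd_le hu hp c g
  have s3 : (∫⁻ g in B, ENNReal.ofReal (2 ^ (p-1)) * (Fd u p (c - g) + Fd u p g)) =
      ENNReal.ofReal (2 ^ (p-1)) * ((∫⁻ g in B, Fd u p (c - g)) + ∫⁻ g in B, Fd u p g) := by
    rw [lintegral_const_mul' _ _ ENNReal.ofReal_ne_top, lintegral_add_left mR]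
  have hpre : (fun t : EuclideanSpace ℝ (Fin N) => c - t) ⁻¹' B = B := by
    ext g
    simp only [Set.mem_preimage, hBdef, mem_ball, dist_eq_norm]
    have key : c - g - (2:ℝ)⁻¹ • c = (2:ℝ)⁻¹ • c - g := by
      module
    rw [key, norm_sub_rev]
  have s4 : (∫⁻ g in B, Fd u p (c - g)) = ∫⁻ g in B, Fd u p g := by
    have hmp := (Measure.measurePreserving_sub_left
      (volume : Measure (EuclideanSpace ℝ (Fin N))) c).setLIntegral_comp_preimage_emb
      (MeasurableEquiv.subLeft c).measurableEmbedding (Fd u p) B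
    rw [hpre] at hmp
    exact hmp
  have s5 : (∫⁻ g in B, Fd u p g) ≤
      ENNReal.ofReal (‖c‖ ^ e) * ∫⁻ g in B, Fd u p g * ENNReal.ofReal ((‖g‖ ^ e)⁻¹) := by
    rw [← lintegral_const_mul _ mW]
    apply setLIntegral_mono (measurable_const.mul mW)
    intro g hg
    obtain ⟨hg1, hg2⟩ := ball_norm_bounds hg
    have hgpos : 0 < ‖g‖ := by nlinarith
    have hge : ‖g‖ ^ e ≤ ‖c‖ ^ e := Real.rpow_le_rpow (norm_nonneg g) (by linarith) he
    have hgepos : 0 < ‖g‖ ^ e := Real.rpow_pos_of_pos hgpos e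
    calc Fd u p g = 1 * Fd u p g := (one_mul _).symm
      _ ≤ (ENNReal.ofReal (‖c‖ ^ e) * ENNReal.ofReal ((‖g‖ ^ e)⁻¹)) * Fd u p g := by
          apply mul_le_mul_left
          rw [← ENNReal.ofReal_mul (by positivity)]
          rw [ENNReal.one_le_ofReal]
          rw [← div_eq_mul_inv, le_div_iff₀ hgepos, one_mul]
          exact hge
      _ = ENNReal.ofReal (‖c‖ ^ e) * (Fd u p g * ENNReal.ofReal ((‖g‖ ^ e)⁻¹)) := by ring
  calc volume B * Fd u p c = ∫⁻ _ in B, Fd u p c := s1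
    _ ≤ ∫⁻ g in B, ENNReal.ofReal (2 ^ (p-1)) * (Fd u p (c - g) + Fd u p g) := s2
    _ = ENNReal.ofReal (2 ^ (p-1)) * ((∫⁻ g in B, Fd u p (c - g)) + ∫⁻ g in B, Fd u p g) := s3
    _ = ENNReal.ofReal (2 ^ (p-1)) * ENNReal.ofReal 2 * ∫⁻ g in B, Fd u p g := by
        rw [s4, ← two_mul, ENNReal.ofReal_ofNat, mul_assoc]
    _ ≤ ENNReal.ofReal (2 ^ (p-1)) * ENNReal.ofReal 2 *
        (ENNReal.ofReal (‖c‖ ^ e) * ∫⁻ g in B, Fd u p g * ENNReal.ofReal ((‖g‖ ^ e)⁻¹)) :=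
        mul_le_mul_right s5 _
    _ = ENNReal.ofReal (2 ^ p * ‖c‖ ^ e) *
        ∫⁻ g in B, Fd u p g * ENNReal.ofReal ((‖g‖ ^ e)⁻¹) := by
        rw [← ENNReal.ofReal_mul (by positivity), ← mul_assoc,
          ← ENNReal.ofReal_mul (by positivity)]
        congr 2
        rw [Real.rpow_sub two_pos]
        field_simp
        norm_num

lemma ofReal_shuffle (a b c : ℝ) (ha : 0 ≤ a) (hb : 0 ≤ b) (hc : 0 ≤ c) (X Y : ℝ≥0∞) :
    ENNReal.ofReal a * (ENNReal.ofReal b * X * (ENNReal.ofReal c * Y)) =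
      ENNReal.ofReal (a * b * c) * (X * Y) := by
  rw [ENNReal.ofReal_mul (by positivity : (0:ℝ) ≤ a * b), ENNReal.ofReal_mul ha]
  ring

lemma const_calc (p t : ℝ) (j n : ℕ) {H : ℝ} (hH : 0 < H) :
    (2:ℝ) ^ (p * (j:ℝ)) * ((H / 2^j / 8) ^ n)⁻¹ * ((2:ℝ)^p * (H / 2^j) ^ ((n:ℝ) + t)) =
      ((2:ℝ)^p * 8 ^ n) * ((2:ℝ) ^ ((j:ℝ) * (p - t)) * H ^ t) := by
  have h2j : (0:ℝ) < 2^j := pow_pos two_pos j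
  have hc : (0:ℝ) < H / 2^j := div_pos hH h2j
  have e1 : (H / 2^j) ^ ((n:ℝ) + t) = (H/2^j)^n * (H/2^j)^t := by
    rw [Real.rpow_add hc, Real.rpow_natCast]
  have e2 : (H/2^j) ^ t = H ^ t * ((2:ℝ) ^ ((j:ℝ) * t))⁻¹ := by
    rw [Real.div_rpow hH.le h2j.le, ← Real.rpow_natCast 2 j,
      ← Real.rpow_mul (by norm_num : (0:ℝ) ≤ 2), div_eq_mul_inv]
  have e4 : (2:ℝ) ^ (p * (j:ℝ)) = (2:ℝ) ^ ((j:ℝ)*(p-t)) * (2:ℝ) ^ ((j:ℝ)*t) := by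
    rw [← Real.rpow_add two_pos]; ring_nf
  have e3 : (H / 2^j / 8) ^ n = (H/2^j)^n / 8^n := div_pow _ _ n
  rw [e1, e2, e4, e3]
  have hcn : ((H/2^j):ℝ)^n ≠ 0 := pow_ne_zero _ hc.ne'
  have h2t : ((2:ℝ) ^ ((j:ℝ)*t)) ≠ 0 := (Real.rpow_pos_of_pos two_pos _).ne'
  have h8 : ((8:ℝ))^n ≠ 0 := pow_ne_zero _ (by norm_num)
  field_simp

end

end Nikolskii

open Nikolskii

theorem nikolskii_embedding {N : ℕ} (p : ℝ) (hp : 1 ≤ p) :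
    ∃ C : ℝ, 0 < C ∧
      ∀ s ∈ Set.Ioo (0 : ℝ) 1,
        ∀ u : EuclideanSpace ℝ (Fin N) → ℝ, ContDiff ℝ (⊤ : ℕ∞) u → HasCompactSupport u →
          ∀ h : EuclideanSpace ℝ (Fin N), h ≠ 0 →
            ∫⁻ x, ENNReal.ofReal (|u (x + h) - u x| ^ p / ‖h‖ ^ (s * p)) ≤
              ENNReal.ofReal (C * (1 - s)) *
                ∫⁻ x, ∫⁻ y,
                  ENNReal.ofReal (|u x - u y| ^ p / ‖x - y‖ ^ ((N : ℝ) + s * p)) := by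
  rcases Nat.eq_zero_or_pos N with hN | hN
  · subst hN
    refine ⟨1, one_pos, ?_⟩
    intro s hs u hu hcs h hne
    exact absurd (Subsingleton.elim h 0) hne
  haveI : Nonempty (Fin N) := ⟨⟨0, hN⟩⟩
  haveI : Nontrivial (EuclideanSpace ℝ (Fin N)) := by
    refine ⟨EuclideanSpace.single ⟨0, hN⟩ 1, 0, fun hcontra => one_ne_zero (α := ℝ) ?_⟩
    calc (1:ℝ) = EuclideanSpace.single (⟨0, hN⟩ : Fin N) (1:ℝ) ⟨0, hN⟩ := by
          rw [EuclideanSpace.single_apply]; simp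
      _ = (0 : EuclideanSpace ℝ (Fin N)) ⟨0, hN⟩ := by rw [hcontra]
      _ = 0 := rfl
  set V : ℝ≥0∞ := volume (ball (0 : EuclideanSpace ℝ (Fin N)) 1) with hV
  have hV0 : V ≠ 0 := (measure_ball_pos _ _ one_pos).ne'
  have hVtop : V ≠ ⊤ := measure_ball_lt_top.ne
  set Vr : ℝ := V.toReal with hVrdef
  have hVrpos : 0 < Vr := ENNReal.toReal_pos hV0 hVtop
  have hVinv : V⁻¹ = ENNReal.ofReal (Vr⁻¹) := by
    rw [ENNReal.ofReal_inv_of_pos hVrpos, ENNReal.ofReal_toReal hVtop]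
  have hlog2 : (0:ℝ) < Real.log 2 := Real.log_pos (by norm_num)
  have hp0 : (0:ℝ) < p := lt_of_lt_of_le one_pos hp
  refine ⟨(2:ℝ)^p * 8^N * (p * Real.log 2) / Vr, by positivity, ?_⟩
  intro s hs u hcd hcs h hne
  obtain ⟨hs0, hs1⟩ := hs
  have hu : Continuous u := hcd.continuous
  have hH : (0:ℝ) < ‖h‖ := norm_pos_iff.2 hne
  set t : ℝ := s * p with ht
  have ht0 : 0 < t := mul_pos hs0 hp0
  have htp : t < p := by rw [ht]; nlinarith
  set e : ℝ := (N : ℝ) + t with he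
  have he0 : (0:ℝ) ≤ e := by positivity
  set G := ∫⁻ g, Fd u p g * ENNReal.ofReal ((‖g‖ ^ e)⁻¹) with hG
  have hGeq : (∫⁻ x, ∫⁻ y, ENNReal.ofReal (|u x - u y| ^ p / ‖x - y‖ ^ e)) = G :=
    G_eq hu hp0 he0
  have lhs_eq : (∫⁻ x, ENNReal.ofReal (|u (x + h) - u x| ^ p / ‖h‖ ^ t)) =
      Fd u p h * ENNReal.ofReal ((‖h‖ ^ t)⁻¹) := by
    unfold Fd
    rw [← lintegral_mul_const _ (measA hu hp0 h)]
    apply lintegral_congr; intro x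
    rw [div_eq_mul_inv, ENNReal.ofReal_mul (by positivity)]
  set b : ℕ → ℝ := fun j => 3 * ‖h‖ / (4 * 2 ^ j) with hb
  set A : ℕ → Set (EuclideanSpace ℝ (Fin N)) :=
    fun j => {g | b (j+1) ≤ ‖g‖ ∧ ‖g‖ < b j} with hA
  have hAm : ∀ j, MeasurableSet (A j) := by
    intro j
    have : A j = (fun g : EuclideanSpace ℝ (Fin N) => ‖g‖) ⁻¹' (Set.Ico (b (j+1)) (b j)) := rfl
    rw [this]; exact measurable_norm measurableSet_Ico
  have hbmono : ∀ i j : ℕ, i ≤ j → b j ≤ b i := by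
    intro i j hij
    have h2 : (2:ℝ)^i ≤ 2^j := pow_le_pow_right₀ one_le_two hij
    rw [hb]
    dsimp only
    rw [div_le_div_iff₀ (by positivity) (by positivity)]
    nlinarith [norm_nonneg h, mul_le_mul_of_nonneg_left h2 (by positivity : (0:ℝ) ≤ 12 * ‖h‖)]
  have hdisj : Pairwise (Function.onFun Disjoint A) := by
    have key : ∀ i j, i < j → Disjoint (A i) (A j) := by
      intro i j hij
      rw [Set.disjoint_left]
      rintro g ⟨hi1, hi2⟩ ⟨hj1, hj2⟩
      have : b j ≤ b (i+1) := hbmono _ _ (by omega)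
      linarith
    intro i j hij
    rcases hij.lt_or_gt with h' | h'
    · exact key _ _ h'
    · exact (key _ _ h').symm
  have hsumG : (∑' j : ℕ, ∫⁻ g in A j, Fd u p g * ENNReal.ofReal ((‖g‖ ^ e)⁻¹)) ≤ G := by
    rw [← lintegral_iUnion hAm hdisj]
    exact setLIntegral_le_lintegral _ _
  have perj : ∀ j : ℕ, ENNReal.ofReal (((2:ℝ) ^ ((j:ℝ) * (p - t)))⁻¹) *
      (Fd u p h * ENNReal.ofReal ((‖h‖ ^ t)⁻¹)) ≤
      ENNReal.ofReal ((2:ℝ)^p * 8^N) * V⁻¹ *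
        ∫⁻ g in A j, Fd u p g * ENNReal.ofReal ((‖g‖ ^ e)⁻¹) := by
    intro j
    set c : EuclideanSpace ℝ (Fin N) := ((2:ℝ)^j)⁻¹ • h with hc
    have h2j : (0:ℝ) < 2^j := pow_pos two_pos j
    have hcne : c ≠ 0 := smul_ne_zero (inv_ne_zero h2j.ne') hne
    have hcn : ‖c‖ = ‖h‖ / 2^j := by
      rw [hc, norm_smul, norm_inv, Real.norm_eq_abs, abs_of_pos h2j, div_eq_inv_mul]
    have hcpos : 0 < ‖c‖ := norm_pos_iff.2 hcne
    set B := ball ((2:ℝ)⁻¹ • c) (‖c‖/8) with hBd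
    set I := ∫⁻ g in A j, Fd u p g * ENNReal.ofReal ((‖g‖ ^ e)⁻¹) with hI
    have hBA : B ⊆ A j := by
      intro g hg
      obtain ⟨hg1, hg2⟩ := ball_norm_bounds hg
      have hbj1 : b (j+1) = 3/8 * ‖c‖ := by
        rw [hb]
        dsimp only
        rw [hcn, pow_succ]
        field_simp
        try ring
      have hbj : b j = 3/4 * ‖c‖ := by
        rw [hb]
        dsimp only
        rw [hcn]
        field_simp
        try ring
      constructor
      · rw [hbj1]; linarith
      · rw [hbj]; linarith
    have hvol : volume B = ENNReal.ofReal ((‖c‖/8)^N) * V := by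
      rw [hBd, Measure.addHaar_ball _ _ (by positivity : (0:ℝ) ≤ ‖c‖/8)]
      rw [hV]
      simp [finrank_euclideanSpace_fin]
    have stepA : Fd u p h ≤ ENNReal.ofReal ((2:ℝ)^(p * (j:ℝ))) * Fd u p c := by
      have hfd := Fd_pow hu hp c j
      rw [hc, smul_inv_smul₀ h2j.ne'] at hfd
      exact hfd
    have stepB : Fd u p c ≤ ENNReal.ofReal (((‖c‖/8)^N)⁻¹) * V⁻¹ *
        (ENNReal.ofReal ((2:ℝ)^p * ‖c‖^e) * I) := by
      have havg := avg hu hp he0 c hcne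
      have hIBle : (∫⁻ g in B, Fd u p g * ENNReal.ofReal ((‖g‖ ^ e)⁻¹)) ≤ I :=
        lintegral_mono_set hBA
      have h1 : volume B * Fd u p c ≤ ENNReal.ofReal ((2:ℝ)^p * ‖c‖^e) * I :=
        havg.trans (mul_le_mul_right hIBle _)
      have hvne0 : volume B ≠ 0 := by
        rw [hBd]; exact (measure_ball_pos _ _ (by positivity)).ne'
      have hvnetop : volume B ≠ ⊤ := by rw [hBd]; exact measure_ball_lt_top.ne
      have hofne0 : ENNReal.ofReal ((‖c‖/8)^N) ≠ 0 := by
        simp only [ne_eq, ENNReal.ofReal_eq_zero, not_le]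
        positivity
      calc Fd u p c = (volume B)⁻¹ * (volume B * Fd u p c) := by
            rw [← mul_assoc, ENNReal.inv_mul_cancel hvne0 hvnetop, one_mul]
        _ ≤ (volume B)⁻¹ * (ENNReal.ofReal ((2:ℝ)^p * ‖c‖^e) * I) := mul_le_mul_right h1 _
        _ = ENNReal.ofReal (((‖c‖/8)^N)⁻¹) * V⁻¹ *
            (ENNReal.ofReal ((2:ℝ)^p * ‖c‖^e) * I) := by
            rw [hvol, ENNReal.mul_inv (Or.inl hofne0) (Or.inl ENNReal.ofReal_ne_top),
              ← ENNReal.ofReal_inv_of_pos (by positivity)]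
    have step := stepA.trans (mul_le_mul_right stepB _)
    have rearr := ofReal_shuffle ((2:ℝ)^(p * (j:ℝ))) (((‖c‖/8)^N)⁻¹) ((2:ℝ)^p * ‖c‖^e)
      (by positivity) (by positivity) (by positivity) V⁻¹ I
    have hX : (2:ℝ)^(p*(j:ℝ)) * ((‖c‖/8)^N)⁻¹ * ((2:ℝ)^p * ‖c‖^e) =
        ((2:ℝ)^p * 8^N) * ((2:ℝ)^((j:ℝ)*(p - t)) * ‖h‖^t) := by
      rw [hcn, he]
      exact const_calc p t j N hH
    rw [rearr, hX] at step
    have h2jpt : (0:ℝ) < (2:ℝ)^((j:ℝ)*(p-t)) := Real.rpow_pos_of_pos two_pos _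
    have hHt : (0:ℝ) < ‖h‖^t := Real.rpow_pos_of_pos hH _
    calc ENNReal.ofReal (((2:ℝ) ^ ((j:ℝ) * (p - t)))⁻¹) *
          (Fd u p h * ENNReal.ofReal ((‖h‖ ^ t)⁻¹))
        ≤ ENNReal.ofReal (((2:ℝ) ^ ((j:ℝ) * (p - t)))⁻¹) *
          ((ENNReal.ofReal (((2:ℝ)^p * 8^N) * ((2:ℝ)^((j:ℝ)*(p - t)) * ‖h‖^t)) * (V⁻¹ * I)) *
            ENNReal.ofReal ((‖h‖ ^ t)⁻¹)) := by
          exact mul_le_mul_right (mul_le_mul_left step _) _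
      _ = (ENNReal.ofReal (((2:ℝ) ^ ((j:ℝ) * (p - t)))⁻¹) *
            ENNReal.ofReal (((2:ℝ)^p * 8^N) * ((2:ℝ)^((j:ℝ)*(p - t)) * ‖h‖^t)) *
            ENNReal.ofReal ((‖h‖ ^ t)⁻¹)) * (V⁻¹ * I) := by ring
      _ = ENNReal.ofReal ((2:ℝ)^p * 8^N) * (V⁻¹ * I) := by
          rw [← ENNReal.ofReal_mul (by positivity), ← ENNReal.ofReal_mul (by positivity)]
          congr 1
          field_simp
      _ = ENNReal.ofReal ((2:ℝ)^p * 8^N) * V⁻¹ * I := by rw [mul_assoc]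
  -- geometric summation
  set θ : ℝ := ((2:ℝ) ^ (p - t))⁻¹ with hθ
  have hθ0 : 0 ≤ θ := by positivity
  have hθ1 : θ < 1 := by
    rw [hθ]
    have h1 : 1 < (2:ℝ)^(p-t) :=
      (Real.one_lt_rpow_iff_of_pos two_pos).2 (Or.inl ⟨one_lt_two, sub_pos.2 htp⟩)
    rw [inv_lt_one_iff₀]
    right; exact h1
  have hθj : ∀ j : ℕ, θ ^ j = ((2:ℝ) ^ ((j:ℝ) * (p - t)))⁻¹ := by
    intro j
    rw [hθ, inv_pow, ← Real.rpow_natCast ((2:ℝ)^(p-t)) j,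
      ← Real.rpow_mul (by norm_num : (0:ℝ) ≤ 2), mul_comm]
  set T := Fd u p h * ENNReal.ofReal ((‖h‖ ^ t)⁻¹) with hT
  set K := ENNReal.ofReal ((2:ℝ)^p * 8^N) * V⁻¹ with hK
  have hsum : ∀ j : ℕ, ENNReal.ofReal (θ ^ j) * T ≤
      K * ∫⁻ g in A j, Fd u p g * ENNReal.ofReal ((‖g‖ ^ e)⁻¹) := by
    intro j
    rw [hθj]
    exact perj j
  have S1 : (∑' j : ℕ, ENNReal.ofReal (θ ^ j) * T) = (1 - ENNReal.ofReal θ)⁻¹ * T := by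
    rw [ENNReal.tsum_mul_right]
    congr 1
    simp_rw [ENNReal.ofReal_pow hθ0]
    exact ENNReal.tsum_geometric _
  have main : (1 - ENNReal.ofReal θ)⁻¹ * T ≤ K * G := by
    rw [← S1]
    refine (ENNReal.tsum_le_tsum hsum).trans ?_
    rw [ENNReal.tsum_mul_left]
    exact mul_le_mul_right hsumG _
  have h1θ : (1:ℝ≥0∞) - ENNReal.ofReal θ = ENNReal.ofReal (1 - θ) := by
    rw [ENNReal.ofReal_sub 1 hθ0, ENNReal.ofReal_one]
  have hT_le : T ≤ ENNReal.ofReal (1 - θ) * (K * G) := by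
    have h1θ0 : ENNReal.ofReal (1-θ) ≠ 0 := by
      simp only [ne_eq, ENNReal.ofReal_eq_zero, not_le]; linarith
    calc T = (ENNReal.ofReal (1-θ) * (ENNReal.ofReal (1-θ))⁻¹) * T := by
          rw [ENNReal.mul_inv_cancel h1θ0 ENNReal.ofReal_ne_top, one_mul]
      _ = ENNReal.ofReal (1-θ) * ((1 - ENNReal.ofReal θ)⁻¹ * T) := by rw [← h1θ, mul_assoc]
      _ ≤ ENNReal.ofReal (1-θ) * (K * G) := mul_le_mul_right main _
  have hexp : 1 - θ ≤ (p - t) * Real.log 2 := by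
    have h3 : θ = Real.exp (-((p - t) * Real.log 2)) := by
      rw [hθ, ← Real.exp_log (Real.rpow_pos_of_pos two_pos (p-t)), ← Real.exp_neg,
        Real.log_rpow two_pos]
    have hx := Real.add_one_le_exp (-((p - t) * Real.log 2))
    rw [h3]
    linarith
  have hfinal : ENNReal.ofReal (1 - θ) * (K * G) ≤
      ENNReal.ofReal ((2:ℝ)^p * 8^N * (p * Real.log 2) / Vr * (1 - s)) * G := by
    have hcoef : ENNReal.ofReal (1 - θ) * K ≤
        ENNReal.ofReal ((2:ℝ)^p * 8^N * (p * Real.log 2) / Vr * (1 - s)) := by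
      have hθle : (0:ℝ) ≤ 1 - θ := by linarith
      rw [hK, hVinv, ← mul_assoc, ← ENNReal.ofReal_mul hθle,
        ← ENNReal.ofReal_mul (by positivity : (0:ℝ) ≤ (1 - θ) * ((2:ℝ)^p * 8^N))]
      apply ENNReal.ofReal_le_ofReal
      have hpt : (p - t) * Real.log 2 = p * (1 - s) * Real.log 2 := by rw [ht]; ring
      have h1θle : 1 - θ ≤ p * (1 - s) * Real.log 2 := by rw [← hpt]; exact hexp
      have hfac : (0:ℝ) ≤ (2:ℝ)^p * 8^N * Vr⁻¹ := by positivity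
      calc (1 - θ) * ((2:ℝ)^p * 8^N) * Vr⁻¹ = (1 - θ) * ((2:ℝ)^p * 8^N * Vr⁻¹) := by ring
        _ ≤ (p * (1 - s) * Real.log 2) * ((2:ℝ)^p * 8^N * Vr⁻¹) :=
            mul_le_mul_of_nonneg_right h1θle hfac
        _ = (2:ℝ)^p * 8^N * (p * Real.log 2) / Vr * (1 - s) := by
            field_simp
    calc ENNReal.ofReal (1 - θ) * (K * G) = (ENNReal.ofReal (1 - θ) * K) * G :=
          (mul_assoc _ _ _).symm
      _ ≤ ENNReal.ofReal ((2:ℝ)^p * 8^N * (p * Real.log 2) / Vr * (1 - s)) * G :=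
          mul_le_mul_left hcoef _
  calc (∫⁻ x, ENNReal.ofReal (|u (x + h) - u x| ^ p / ‖h‖ ^ t)) = T := lhs_eq
    _ ≤ ENNReal.ofReal (1 - θ) * (K * G) := hT_le
    _ ≤ ENNReal.ofReal ((2:ℝ)^p * 8^N * (p * Real.log 2) / Vr * (1 - s)) * G := hfinal
    _ = ENNReal.ofReal ((2:ℝ)^p * 8^N * (p * Real.log 2) / Vr * (1 - s)) *
        ∫⁻ x, ∫⁻ y, ENNReal.ofReal (|u x - u y| ^ p / ‖x - y‖ ^ e) := by rw [hGeq]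
end
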